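/- arXiv:2505.07353 — 4 statements merged into one kernel-verified Lean document; each statement's English description precedes it below -/
import Mathlib

section
/- Let λ, μ > 0, r ∈ ℝ, c̄ > 0, and let ĉ : [0,1] → ℝ be continuously differentiable with sup_{x∈[0,1]} |ĉ(x)| ≤ c̄. Then the Goursat-type kernel system on the triangle T = {(x,ξ) : 0 ≤ ξ ≤ x ≤ 1}, namely μ ∂ₓK^u(x,ξ) = λ ∂_ξK^u(x,ξ) + ĉ(ξ) K^v(x,ξ), μ ∂ₓK^v(x,ξ) = −μ ∂_ξK^v(x,ξ), with boundary conditions K^u(x,x) = −ĉ(x)/(λ+μ) and K^v(x,0) = (λ r / μ) K^u(x,0), has a unique pair of continuously differentiable solutions (K^u, K^v) on T, and there exists a constant K̄ > 0, depending only on c̄, λ, μ and r, such that |K^u(x,ξ)| ≤ K̄ and |K^v(x,ξ)| ≤ K̄ for all (x,ξ) ∈ T. -/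
open Set MeasureTheory

/-- The closed triangle `T = {(x, ξ) : 0 ≤ ξ ≤ x ≤ 1}`. -/
def Tri : Set (ℝ × ℝ) := {p : ℝ × ℝ | 0 ≤ p.2 ∧ p.2 ≤ p.1 ∧ p.1 ≤ 1}

/-- `(Ku, Kv)` is a `C¹` solution on the triangle `Tri` of the Goursat-type
backstepping gain-kernel system
`μ ∂ₓ Ku = λ ∂_ξ Ku + ĉ(ξ) Kv`, `μ ∂ₓ Kv = −μ ∂_ξ Kv`,
`Ku(x,x) = −ĉ(x)/(λ+μ)`, `Kv(x,0) = (λ r/μ) Ku(x,0)`. -/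
def IsKernelSol (lam mu r : ℝ) (chat : ℝ → ℝ) (Ku Kv : ℝ × ℝ → ℝ) : Prop :=
  ContDiffOn ℝ 1 Ku Tri ∧ ContDiffOn ℝ 1 Kv Tri ∧
  (∀ p ∈ Tri, mu * fderivWithin ℝ Ku Tri p (1, 0)
      = lam * fderivWithin ℝ Ku Tri p (0, 1) + chat p.2 * Kv p) ∧
  (∀ p ∈ Tri, mu * fderivWithin ℝ Kv Tri p (1, 0)
      = - (mu * fderivWithin ℝ Kv Tri p (0, 1))) ∧
  (∀ x ∈ Icc (0:ℝ) 1, Ku (x, x) = - chat x / (lam + mu)) ∧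
  (∀ x ∈ Icc (0:ℝ) 1, Kv (x, 0) = (lam * r / mu) * Ku (x, 0))

open intervalIntegral Asymptotics Filter Topology BoundedContinuousFunction

set_option linter.unusedTactic false
set_option linter.unreachableTactic false
set_option maxHeartbeats 1000000

section Param

variable {g g' : ℝ → ℝ → ℝ}

lemma paramInt_hasFDerivAt (hg : Continuous (Function.uncurry g))
    (hg' : Continuous (Function.uncurry g'))
    (hd : ∀ d s, HasDerivAt (fun d => g d s) (g' d s) d) (p₀ : ℝ × ℝ) :
    HasFDerivAt (fun p : ℝ × ℝ => ∫ s in (0:ℝ)..p.2, g p.1 s)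
      ((∫ s in (0:ℝ)..p₀.2, g' p₀.1 s) • ContinuousLinearMap.fst ℝ ℝ ℝ
        + (g p₀.1 p₀.2) • ContinuousLinearMap.snd ℝ ℝ ℝ) p₀ := by
  obtain ⟨d₀, T₀⟩ := p₀
  have hgc : ∀ d, Continuous (g d) := fun d =>
    hg.comp (continuous_const.prodMk continuous_id)
  have hgc' : ∀ d, Continuous (g' d) := fun d =>
    hg'.comp (continuous_const.prodMk continuous_id)
  have h1 : HasDerivAt (fun d => ∫ s in (0:ℝ)..T₀, g d s)
      (∫ s in (0:ℝ)..T₀, g' d₀ s) d₀ := by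
    obtain ⟨M, hM⟩ : ∃ M, ∀ q ∈ Icc (d₀ - 1) (d₀ + 1) ×ˢ uIcc (0:ℝ) T₀,
        ‖Function.uncurry g' q‖ ≤ M :=
      (isCompact_Icc.prod isCompact_uIcc).exists_bound_of_continuousOn hg'.continuousOn
    exact (intervalIntegral.hasDerivAt_integral_of_dominated_loc_of_deriv_le
      (F := fun d s => g d s) (F' := fun d s => g' d s) (bound := fun _ => M)
      (Metric.ball_mem_nhds d₀ zero_lt_one)
      (Eventually.of_forall fun d => (hgc d).aestronglyMeasurable)
      ((hgc d₀).intervalIntegrable _ _)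
      (hgc' d₀).aestronglyMeasurable
      (Eventually.of_forall fun t ht x hx => by
        refine hM (x, t) ⟨?_, uIoc_subset_uIcc ht⟩
        have := mem_ball_iff_norm.1 hx
        rw [Real.norm_eq_abs, abs_lt] at this
        exact ⟨by linarith [this.1], by linarith [this.2]⟩)
      intervalIntegrable_const
      (Eventually.of_forall fun t _ x _ => hd x t)).2
  have h1' : HasFDerivAt (fun p : ℝ × ℝ => ∫ s in (0:ℝ)..T₀, g p.1 s)
      ((∫ s in (0:ℝ)..T₀, g' d₀ s) • ContinuousLinearMap.fst ℝ ℝ ℝ) (d₀, T₀) :=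
    by
      have := h1.comp_hasFDerivAt ((d₀, T₀) : ℝ × ℝ) (hasFDerivAt_fst :
        HasFDerivAt (Prod.fst : ℝ × ℝ → ℝ) (ContinuousLinearMap.fst ℝ ℝ ℝ) ((d₀, T₀) : ℝ × ℝ))
      exact this
  have h2 : HasFDerivAt (fun p : ℝ × ℝ => ∫ s in T₀..p.2, g p.1 s)
      ((g d₀ T₀) • ContinuousLinearMap.snd ℝ ℝ ℝ) (d₀, T₀) := by
    rw [hasFDerivAt_iff_isLittleO_nhds_zero, isLittleO_iff]
    intro c hc
    obtain ⟨δ, hδ, hball⟩ := Metric.continuousAt_iff.1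
      (hg.continuousAt (x := ((d₀, T₀) : ℝ × ℝ))) c hc
    have hev : ∀ᶠ h : ℝ × ℝ in 𝓝 0, ‖h‖ < δ := by
      filter_upwards [Metric.ball_mem_nhds (0 : ℝ × ℝ) hδ] with h hh
      simpa [dist_eq_norm] using hh
    filter_upwards [hev] with h hh
    have hint1 : IntervalIntegrable (fun s => g (d₀ + h.1) s) volume T₀ (T₀ + h.2) :=
      (hgc _).intervalIntegrable _ _
    have e0 : (∫ s in T₀..(((d₀, T₀) + h).2 : ℝ), g (((d₀, T₀) + h).1) s)
        - (∫ s in T₀..T₀, g d₀ s)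
        - ((g d₀ T₀) • ContinuousLinearMap.snd ℝ ℝ ℝ) h
        = ∫ s in T₀..(T₀ + h.2), (g (d₀ + h.1) s - g d₀ T₀) := by
      rw [intervalIntegral.integral_sub hint1 intervalIntegrable_const,
        intervalIntegral.integral_const, intervalIntegral.integral_same]
      simp [smul_eq_mul]
      ring
    have hb : ∀ s ∈ uIoc T₀ (T₀ + h.2), ‖g (d₀ + h.1) s - g d₀ T₀‖ ≤ c := by
      intro s hs
      have hs' := uIoc_subset_uIcc hs
      rw [mem_uIcc] at hs'
      have hs2 : |s - T₀| ≤ |h.2| := by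
        rw [abs_le]
        rcases hs' with ⟨ha, hb2⟩ | ⟨ha, hb2⟩ <;> constructor <;>
          linarith [neg_abs_le h.2, le_abs_self h.2, abs_nonneg h.2]
      have n1 : |h.1| ≤ ‖h‖ := by simpa [Real.norm_eq_abs] using norm_fst_le h
      have n2 : |h.2| ≤ ‖h‖ := by simpa [Real.norm_eq_abs] using norm_snd_le h
      have hdist : dist (d₀ + h.1, s) (d₀, T₀) < δ := by
        rw [Prod.dist_eq]
        have e1 : dist (d₀ + h.1) d₀ = |h.1| := by rw [Real.dist_eq]; ring_nf
        have e2 : dist s T₀ = |s - T₀| := Real.dist_eq _ _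
        rw [e1, e2]
        exact lt_of_le_of_lt (max_le n1 (hs2.trans n2)) hh
      have := hball hdist
      rw [show Function.uncurry g (d₀ + h.1, s) = g (d₀ + h.1) s from rfl,
        show Function.uncurry g (d₀, T₀) = g d₀ T₀ from rfl, Real.dist_eq] at this
      exact le_of_lt (by simpa [Real.norm_eq_abs] using this)
    calc ‖(∫ s in T₀..(((d₀, T₀) + h).2 : ℝ), g (((d₀, T₀) + h).1) s)
          - (∫ s in T₀..T₀, g d₀ s)
          - ((g d₀ T₀) • ContinuousLinearMap.snd ℝ ℝ ℝ) h‖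
        = ‖∫ s in T₀..(T₀ + h.2), (g (d₀ + h.1) s - g d₀ T₀)‖ := by rw [e0]
      _ ≤ c * |(T₀ + h.2) - T₀| := intervalIntegral.norm_integral_le_of_norm_le_const hb
      _ ≤ c * ‖h‖ := by
          have he : |(T₀ + h.2) - T₀| = |h.2| := by ring_nf
          rw [he]
          have n2 : |h.2| ≤ ‖h‖ := by simpa [Real.norm_eq_abs] using norm_snd_le h
          exact mul_le_mul_of_nonneg_left n2 (le_of_lt hc)
  have hsplit : (fun p : ℝ × ℝ => ∫ s in (0:ℝ)..p.2, g p.1 s)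
      = fun p : ℝ × ℝ => (∫ s in (0:ℝ)..T₀, g p.1 s) + ∫ s in T₀..p.2, g p.1 s :=
    funext fun p => (intervalIntegral.integral_add_adjacent_intervals
      ((hgc p.1).intervalIntegrable _ _) ((hgc p.1).intervalIntegrable _ _)).symm
  rw [hsplit]
  exact h1'.add h2

lemma paramInt_contDiff (hg : Continuous (Function.uncurry g))
    (hg' : Continuous (Function.uncurry g'))
    (hd : ∀ d s, HasDerivAt (fun d => g d s) (g' d s) d) :
    ContDiff ℝ 1 (fun p : ℝ × ℝ => ∫ s in (0:ℝ)..p.2, g p.1 s) := by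
  rw [contDiff_one_iff_fderiv]
  have hdiff : Differentiable ℝ (fun p : ℝ × ℝ => ∫ s in (0:ℝ)..p.2, g p.1 s) :=
    fun p => (paramInt_hasFDerivAt hg hg' hd p).differentiableAt
  refine ⟨hdiff, ?_⟩
  have : (fun p => fderiv ℝ (fun p : ℝ × ℝ => ∫ s in (0:ℝ)..p.2, g p.1 s) p)
      = fun p : ℝ × ℝ => (∫ s in (0:ℝ)..p.2, g' p.1 s) • ContinuousLinearMap.fst ℝ ℝ ℝ
        + (g p.1 p.2) • ContinuousLinearMap.snd ℝ ℝ ℝ :=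
    funext fun p => (paramInt_hasFDerivAt hg hg' hd p).fderiv
  rw [show (fderiv ℝ fun p : ℝ × ℝ => ∫ s in (0:ℝ)..p.2, g p.1 s) = _ from this]
  have hc1 : Continuous fun p : ℝ × ℝ => ∫ s in (0:ℝ)..p.2, g' p.1 s :=
    intervalIntegral.continuous_parametric_primitive_of_continuous hg'
  have hc2 : Continuous fun p : ℝ × ℝ => g p.1 p.2 := by
    exact hg.comp (continuous_fst.prodMk continuous_snd)
  exact (hc1.smul continuous_const).add (hc2.smul continuous_const)

end Param

/-- clamp to [0,1] -/
noncomputable def cl01 (y : ℝ) : ℝ := max 0 (min 1 y)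

lemma cl01_mem (y : ℝ) : cl01 y ∈ Icc (0:ℝ) 1 :=
  ⟨le_max_left _ _, max_le zero_le_one (min_le_left _ _)⟩

lemma cl01_of_mem {y : ℝ} (hy : y ∈ Icc (0:ℝ) 1) : cl01 y = y := by
  rw [cl01, min_eq_right hy.2, max_eq_right hy.1]

lemma cl01_continuous : Continuous cl01 :=
  continuous_const.max (continuous_const.min continuous_id)

lemma exists_C1_extension {f : ℝ → ℝ} (hf : ContDiffOn ℝ 1 f (Icc 0 1)) :
    ∃ F : ℝ → ℝ, ContDiff ℝ 1 F ∧ ∀ x ∈ Icc (0:ℝ) 1, F x = f x := by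
  set w : ℝ → ℝ := derivWithin f (Icc 0 1) with hw
  have hUD : UniqueDiffOn ℝ (Icc (0:ℝ) 1) := uniqueDiffOn_Icc one_pos
  have hwc : ContinuousOn w (Icc 0 1) := hf.continuousOn_derivWithin hUD le_rfl
  have hder : ∀ t ∈ Icc (0:ℝ) 1, HasDerivWithinAt f (w t) (Icc 0 1) t := fun t ht =>
    (hf.differentiableOn one_ne_zero t ht).hasDerivWithinAt
  set F : ℝ → ℝ := fun y => f (cl01 y) + (y - cl01 y) * w (cl01 y) with hF
  set φ : ℝ → ℝ := fun y => w (cl01 y) with hφ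
  have hFf : ∀ x ∈ Icc (0:ℝ) 1, F x = f x := by
    intro x hx; simp [hF, cl01_of_mem hx]
  have hφc : Continuous φ := hwc.comp_continuous cl01_continuous cl01_mem
  have key : ∀ y, HasDerivAt F (φ y) y := by
    intro y
    rcases lt_trichotomy y 0 with hy | hy | hy
    · -- y < 0
      have haff : HasDerivAt (fun z => f 0 + z * w 0) (w 0) y := by
        simpa using ((hasDerivAt_id y).mul_const (w 0)).const_add (f 0)
      have heq : ∀ z ∈ Iio (0:ℝ), F z = f 0 + z * w 0 := by
        intro z hz
        have : cl01 z = 0 := by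
          rw [cl01, min_eq_right (le_of_lt (lt_of_lt_of_le hz zero_le_one)),
            max_eq_left (le_of_lt hz)]
        simp [hF, this]
      have : F =ᶠ[𝓝 y] fun z => f 0 + z * w 0 := by
        filter_upwards [Iio_mem_nhds hy] with z hz using heq z hz
      have hd := haff.congr_of_eventuallyEq this
      have : φ y = w 0 := by
        have : cl01 y = 0 := by
          rw [cl01, min_eq_right (le_of_lt (lt_of_lt_of_le hy zero_le_one)),
            max_eq_left (le_of_lt hy)]
        simp [hφ, this]
      rw [this]; exact hd
    · -- y = 0
      subst hy
      have hIic : HasDerivWithinAt F (w 0) (Iic 0) 0 := by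
        have haff : HasDerivAt (fun z => f 0 + z * w 0) (w 0) 0 := by
          simpa using ((hasDerivAt_id (0:ℝ)).mul_const (w 0)).const_add (f 0)
        refine (haff.hasDerivWithinAt).congr ?_ ?_
        · intro z hz
          have : cl01 z = 0 := by
            rw [cl01, min_eq_right (le_trans hz zero_le_one), max_eq_left hz]
          simp [hF, this]
        · simp [hF, cl01_of_mem (by norm_num : (0:ℝ) ∈ Icc (0:ℝ) 1)]
      have hIci : HasDerivWithinAt F (w 0) (Ici 0) 0 := by
        have h0 : HasDerivWithinAt F (w 0) (Icc 0 1) 0 := by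
          refine (hder 0 (by norm_num)).congr (fun z hz => (hFf z hz)) ?_
          exact hFf 0 (by norm_num)
        refine h0.mono_of_mem_nhdsWithin ?_
        refine mem_nhdsWithin.2 ⟨Iio 1, isOpen_Iio, by norm_num, ?_⟩
        rintro z ⟨hz1, hz2⟩
        exact ⟨hz2, le_of_lt hz1⟩
      have := hIic.union hIci
      rw [Iic_union_Ici] at this
      have h0 : φ 0 = w 0 := by simp [hφ, cl01_of_mem (by norm_num : (0:ℝ) ∈ Icc (0:ℝ) 1)]
      rw [h0]
      exact this.hasDerivAt (by simp)
    · rcases lt_trichotomy y 1 with hy1 | hy1 | hy1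
      · -- 0 < y < 1
        have hmem : y ∈ Icc (0:ℝ) 1 := ⟨le_of_lt hy, le_of_lt hy1⟩
        have hdy : HasDerivAt f (w y) y :=
          (hder y hmem).hasDerivAt (Icc_mem_nhds hy hy1)
        have : F =ᶠ[𝓝 y] f := by
          filter_upwards [Icc_mem_nhds hy hy1] with z hz using hFf z hz
        have hd := hdy.congr_of_eventuallyEq this
        have : φ y = w y := by simp [hφ, cl01_of_mem hmem]
        rw [this]; exact hd
      · -- y = 1
        subst hy1
        have hIci : HasDerivWithinAt F (w 1) (Ici 1) 1 := by
          have haff : HasDerivAt (fun z => f 1 + (z - 1) * w 1) (w 1) 1 := by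
            simpa using (((hasDerivAt_id (1:ℝ)).sub_const 1).mul_const (w 1)).const_add (f 1)
          refine (haff.hasDerivWithinAt).congr ?_ ?_
          · intro z hz
            have : cl01 z = 1 := by
              rw [cl01, min_eq_left hz, max_eq_right zero_le_one]
            simp [hF, this]
          · have : cl01 (1:ℝ) = 1 := cl01_of_mem (by norm_num)
            simp [hF, this]
        have hIic : HasDerivWithinAt F (w 1) (Iic 1) 1 := by
          have h0 : HasDerivWithinAt F (w 1) (Icc 0 1) 1 := by
            refine (hder 1 (by norm_num)).congr (fun z hz => (hFf z hz)) ?_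
            exact hFf 1 (by norm_num)
          refine h0.mono_of_mem_nhdsWithin ?_
          refine mem_nhdsWithin.2 ⟨Ioi 0, isOpen_Ioi, by norm_num, ?_⟩
          rintro z ⟨hz1, hz2⟩
          exact ⟨le_of_lt hz1, hz2⟩
        have := hIic.union hIci
        rw [Iic_union_Ici] at this
        have h1 : φ 1 = w 1 := by simp [hφ, cl01_of_mem (by norm_num : (1:ℝ) ∈ Icc (0:ℝ) 1)]
        rw [h1]
        exact this.hasDerivAt (by simp)
      · -- y > 1
        have haff : HasDerivAt (fun z => f 1 + (z - 1) * w 1) (w 1) y := by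
          simpa using (((hasDerivAt_id y).sub_const 1).mul_const (w 1)).const_add (f 1)
        have heq : ∀ z ∈ Ioi (1:ℝ), F z = f 1 + (z - 1) * w 1 := by
          intro z hz
          have : cl01 z = 1 := by
            rw [cl01, min_eq_left (le_of_lt hz), max_eq_right zero_le_one]
          simp [hF, this]
        have : F =ᶠ[𝓝 y] fun z => f 1 + (z - 1) * w 1 := by
          filter_upwards [Ioi_mem_nhds hy1] with z hz using heq z hz
        have hd := haff.congr_of_eventuallyEq this
        have : φ y = w 1 := by
          have : cl01 y = 1 := by
            rw [cl01, min_eq_left (le_of_lt hy1), max_eq_right zero_le_one]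
          simp [hφ, this]
        rw [this]; exact hd
  refine ⟨F, ?_, hFf⟩
  rw [contDiff_one_iff_deriv]
  refine ⟨fun y => (key y).differentiableAt, ?_⟩
  have : deriv F = φ := funext fun y => (key y).deriv
  rw [this]
  exact hφc

lemma volterra_exists {k : ℝ → ℝ → ℝ} {f0 : ℝ → ℝ} {C0 : ℝ}
    (hk : Continuous (Function.uncurry k)) (hf0 : Continuous f0) (hC0 : 0 ≤ C0)
    (hkb : ∀ y ∈ Icc (0:ℝ) 1, ∀ s ∈ Icc (0:ℝ) y, |k y s| ≤ C0) :
    ∃ u : ℝ → ℝ, Continuous u ∧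
      ∀ y ∈ Icc (0:ℝ) 1, u y = f0 y + ∫ s in (0:ℝ)..y, k y s * u s := by
  classical
  set X := (ℝ →ᵇ ℝ)
  set G : X → ℝ → ℝ := fun u z => f0 z + ∫ s in (0:ℝ)..z, k z s * u s with hGdef
  have hG : ∀ u : X, Continuous (G u) := by
    intro u
    apply hf0.add
    have : Continuous (Function.uncurry fun z s => k z s * u s) :=
      hk.mul (u.continuous.comp continuous_snd)
    exact intervalIntegral.continuous_parametric_intervalIntegral_of_continuous this
      continuous_id
  have hGb : ∀ u : X, ∃ C, ∀ x y : ℝ, dist (G u (cl01 x)) (G u (cl01 y)) ≤ C := by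
    intro u
    obtain ⟨C, hC⟩ := Metric.isBounded_iff.1 (isCompact_Icc.image (hG u)).isBounded
    exact ⟨C, fun x y => hC (mem_image_of_mem _ (cl01_mem x)) (mem_image_of_mem _ (cl01_mem y))⟩
  choose Cb hCb using hGb
  set T : X → X := fun u => BoundedContinuousFunction.mkOfBound
    ⟨fun y => G u (cl01 y), (hG u).comp cl01_continuous⟩ (Cb u) (hCb u) with hT
  have hTval : ∀ (u : X) (y : ℝ), T u y = G u (cl01 y) := fun u y => rfl
  have hint : ∀ (u : X) (z : ℝ), IntervalIntegrable (fun s => k z s * u s) volume 0 z :=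
    fun u z => (((hk.comp (continuous_const.prodMk continuous_id)).mul
      u.continuous)).intervalIntegrable _ _
  have hTdiff : ∀ (a b : X) (y : ℝ),
      T a y - T b y = ∫ s in (0:ℝ)..cl01 y, k (cl01 y) s * (a s - b s) := by
    intro a b y
    rw [hTval, hTval]
    show (f0 (cl01 y) + ∫ s in (0:ℝ)..cl01 y, k (cl01 y) s * a s)
        - (f0 (cl01 y) + ∫ s in (0:ℝ)..cl01 y, k (cl01 y) s * b s) = _
    rw [add_sub_add_left_eq_sub, ← intervalIntegral.integral_sub (hint a _) (hint b _)]
    refine intervalIntegral.integral_congr fun s _ => by ring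
  have iter : ∀ (n : ℕ) (a b : X) (y : ℝ),
      |T^[n] a y - T^[n] b y| ≤ C0 ^ n * (cl01 y) ^ n / n.factorial * dist a b := by
    intro n
    induction n with
    | zero =>
      intro a b y
      simpa [Real.dist_eq] using BoundedContinuousFunction.dist_coe_le_dist (f := a) (g := b) y
    | succ n ih =>
      intro a b y
      rw [Function.iterate_succ_apply', Function.iterate_succ_apply']
      rw [hTdiff]
      have h0cl : (0:ℝ) ≤ cl01 y := (cl01_mem y).1
      have hcl1 : cl01 y ≤ 1 := (cl01_mem y).2
      calc |∫ s in (0:ℝ)..cl01 y, k (cl01 y) s * (T^[n] a s - T^[n] b s)|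
          ≤ ∫ s in (0:ℝ)..cl01 y, |k (cl01 y) s * (T^[n] a s - T^[n] b s)| :=
            intervalIntegral.abs_integral_le_integral_abs h0cl
        _ ≤ ∫ s in (0:ℝ)..cl01 y, (C0 ^ (n+1) / n.factorial * dist a b) * s ^ n := by
            apply intervalIntegral.integral_mono_on h0cl
            · exact (((hk.comp (continuous_const.prodMk continuous_id)).mul
                ((T^[n] a).continuous.sub (T^[n] b).continuous)).abs).intervalIntegrable _ _
            · exact (continuous_const.mul (continuous_pow n)).intervalIntegrable _ _
            · intro s hs
              have hs01 : s ∈ Icc (0:ℝ) 1 := ⟨hs.1, hs.2.trans hcl1⟩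
              have hcs : cl01 s = s := cl01_of_mem hs01
              have h1 : |k (cl01 y) s| ≤ C0 := hkb _ (cl01_mem y) s hs
              have h2 : |T^[n] a s - T^[n] b s| ≤ C0 ^ n * s ^ n / n.factorial * dist a b := by
                have := ih a b s
                rwa [hcs] at this
              rw [abs_mul]
              have hnn1 : (0:ℝ) ≤ |T^[n] a s - T^[n] b s| := abs_nonneg _
              have := mul_le_mul h1 h2 hnn1 hC0
              calc |k (cl01 y) s| * |T^[n] a s - T^[n] b s|
                  ≤ C0 * (C0 ^ n * s ^ n / n.factorial * dist a b) := this
                _ = C0 ^ (n+1) / n.factorial * dist a b * s ^ n := by ring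
        _ = (C0 ^ (n+1) / n.factorial * dist a b) * ((cl01 y) ^ (n+1) / (n+1)) := by
            rw [intervalIntegral.integral_const_mul, integral_pow]
            norm_num
        _ = C0 ^ (n+1) * (cl01 y) ^ (n+1) / (n+1).factorial * dist a b := by
            rw [Nat.factorial_succ]
            push_cast
            have h1 : (n.factorial : ℝ) ≠ 0 := by positivity
            have h2 : ((n:ℝ) + 1) ≠ 0 := by positivity
            field_simp
  have lip : ∀ n : ℕ, ∀ a b : X, dist (T^[n] a) (T^[n] b) ≤ C0 ^ n / n.factorial * dist a b := by
    intro n a b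
    have hnn : (0:ℝ) ≤ C0 ^ n / n.factorial * dist a b := by positivity
    rw [BoundedContinuousFunction.dist_le hnn]
    intro y
    rw [Real.dist_eq]
    refine (iter n a b y).trans ?_
    have h1 : (cl01 y) ^ n ≤ 1 := pow_le_one₀ (cl01_mem y).1 (cl01_mem y).2
    calc C0 ^ n * (cl01 y) ^ n / n.factorial * dist a b
        ≤ C0 ^ n * 1 / n.factorial * dist a b := by gcongr
      _ = C0 ^ n / n.factorial * dist a b := by ring
  obtain ⟨n, hn⟩ : ∃ n : ℕ, C0 ^ n / n.factorial < 1 :=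
    ((FloorSemiring.tendsto_pow_div_factorial_atTop C0).eventually_lt_const one_pos).exists
  have hnn : (0:ℝ) ≤ C0 ^ n / n.factorial := by positivity
  set K : NNReal := Real.toNNReal (C0 ^ n / n.factorial) with hK
  have hKcoe : (K : ℝ) = C0 ^ n / n.factorial := Real.coe_toNNReal _ hnn
  have hC : ContractingWith K (T^[n]) := by
    constructor
    · rw [← NNReal.coe_lt_one, hKcoe]; exact hn
    · apply LipschitzWith.of_dist_le_mul
      intro a b
      rw [hKcoe]
      exact lip n a b
  have hfix : Function.IsFixedPt T (ContractingWith.fixedPoint (T^[n]) hC) :=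
    hC.isFixedPt_fixedPoint_iterate
  set v := ContractingWith.fixedPoint (T^[n]) hC with hv
  refine ⟨fun y => v y, v.continuous, ?_⟩
  intro y hy
  have : T v = v := hfix
  have hvy : v y = T v y := by rw [this]
  show v y = f0 y + ∫ s in (0:ℝ)..y, k y s * v s
  rw [hvy, hTval v y, cl01_of_mem hy]

lemma convex_Tri : Convex ℝ Tri := by
  rintro p hp q hq a b ha hb hab
  obtain ⟨h1, h2, h3⟩ := hp
  obtain ⟨g1, g2, g3⟩ := hq
  refine ⟨?_, ?_, ?_⟩ <;> simp only [Prod.smul_snd, Prod.smul_fst, Prod.snd_add, Prod.fst_add,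
    smul_eq_mul] <;> nlinarith

lemma uniqueDiffOn_Tri : UniqueDiffOn ℝ Tri := by
  apply uniqueDiffOn_convex convex_Tri
  refine ⟨((1:ℝ)/2, (1:ℝ)/4), ?_⟩
  have hopen : IsOpen {p : ℝ × ℝ | 0 < p.2 ∧ p.2 < p.1 ∧ p.1 < 1} := by
    refine (isOpen_lt continuous_const continuous_snd).and
      ((isOpen_lt continuous_snd continuous_fst).and (isOpen_lt continuous_fst continuous_const))
  apply mem_interior.2
  refine ⟨{p : ℝ × ℝ | 0 < p.2 ∧ p.2 < p.1 ∧ p.1 < 1}, ?_, hopen, by norm_num⟩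
  rintro z ⟨z1, z2, z3⟩
  exact ⟨le_of_lt z1, le_of_lt z2, le_of_lt z3⟩
section Existence

lemma exists_sol (lam mu r : ℝ) (hlam : 0 < lam) (hmu : 0 < mu) {chat : ℝ → ℝ}
    (hchat : ContDiffOn ℝ 1 chat (Icc 0 1)) :
    ∃ Ku Kv : ℝ × ℝ → ℝ, IsKernelSol lam mu r chat Ku Kv := by
  obtain ⟨cext, hce, hceq⟩ := exists_C1_extension hchat
  have hSg : (0:ℝ) < lam + mu := by linarith
  have hSg' : lam + mu ≠ 0 := ne_of_gt hSg
  set κ : ℝ := lam / (lam + mu) with hκ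
  set κ' : ℝ := mu / (lam + mu) with hκ'
  set β : ℝ := lam * r / (mu * (lam + mu)) with hβ
  have hκ0 : 0 ≤ κ := by positivity
  have hκ1 : κ ≤ 1 := by rw [hκ, div_le_one hSg]; linarith
  -- bound for cext on [0,1]
  obtain ⟨M, hM⟩ : ∃ M, ∀ z ∈ Icc (0:ℝ) 1, |cext z| ≤ M := by
    obtain ⟨M, hM⟩ := isCompact_Icc.exists_bound_of_continuousOn
      ((hce.continuous).continuousOn : ContinuousOn cext (Icc (0:ℝ) 1))
    exact ⟨M, fun z hz => by simpa [Real.norm_eq_abs] using hM z hz⟩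
  have hM0 : 0 ≤ M := le_trans (abs_nonneg _) (hM 0 (by norm_num))
  -- the Volterra fixed point
  have harg : ∀ y ∈ Icc (0:ℝ) 1, ∀ s ∈ Icc (0:ℝ) y, κ * y - κ * s ∈ Icc (0:ℝ) 1 := by
    intro y hy s hs
    constructor
    · have := hs.2; nlinarith
    · have h1 : κ * y - κ * s ≤ κ * y := by nlinarith [hs.1]
      have h2 : κ * y ≤ 1 := by nlinarith [hy.2]
      linarith
  obtain ⟨u, huc, hueq⟩ := volterra_exists
    (k := fun y s => β * cext (κ * y - κ * s)) (f0 := fun y => -cext (κ * y) / (lam + mu))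
    (C0 := |β| * M)
    (by
      have := hce.continuous
      fun_prop)
    (by
      have := hce.continuous
      fun_prop)
    (by positivity)
    (by
      intro y hy s hs
      rw [abs_mul]
      exact mul_le_mul_of_nonneg_left (hM _ (harg y hy s hs)) (abs_nonneg β))
  -- the function g and its parameter derivative
  set g : ℝ → ℝ → ℝ := fun d s => cext (d - κ * s) * u s with hgdef
  set g' : ℝ → ℝ → ℝ := fun d s => deriv cext (d - κ * s) * u s with hg'def
  have hg : Continuous (Function.uncurry g) := by
    apply Continuous.mul
    · exact hce.continuous.comp (continuous_fst.sub (continuous_const.mul continuous_snd))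
    · exact huc.comp continuous_snd
  have hg' : Continuous (Function.uncurry g') := by
    apply Continuous.mul
    · exact (hce.continuous_deriv le_rfl).comp
        (continuous_fst.sub (continuous_const.mul continuous_snd))
    · exact huc.comp continuous_snd
  have hgd : ∀ d s, HasDerivAt (fun d => g d s) (g' d s) d := by
    intro d s
    have h1 : HasDerivAt cext (deriv cext (d - κ * s)) (d - κ * s) :=
      (hce.differentiable one_ne_zero (d - κ * s)).hasDerivAt
    have h2 : HasDerivAt (fun d : ℝ => d - κ * s) 1 d := (hasDerivAt_id d).sub_const _
    have := (h1.comp d h2).mul_const (u s)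
    simpa using this
  set Φ : ℝ × ℝ → ℝ := fun p => ∫ s in (0:ℝ)..p.2, g p.1 s with hΦdef
  have hΦD := paramInt_hasFDerivAt hg hg' hgd
  have hΦC : ContDiff ℝ 1 Φ := paramInt_contDiff hg hg' hgd
  -- the boundary trace function U
  set U : ℝ → ℝ := fun y => -cext (κ * y) / (lam + mu) + β * Φ (κ * y, y) with hUdef
  have hUu : ∀ y ∈ Icc (0:ℝ) 1, U y = u y := by
    intro y hy
    rw [hueq y hy, hUdef]
    simp only
    congr 1
    rw [hΦdef]
    simp only
    rw [← intervalIntegral.integral_const_mul]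
    exact intervalIntegral.integral_congr fun s _ => by rw [hgdef]; ring
  have hUC : ContDiff ℝ 1 U := by
    apply ContDiff.add
    · exact ((hce.comp (contDiff_const.mul contDiff_id)).neg).div_const _
    · exact contDiff_const.mul (hΦC.comp ((contDiff_const.mul contDiff_id).prodMk contDiff_id))
  -- the kernels
  set dd : ℝ × ℝ → ℝ := fun p => κ * p.1 + κ' * p.2 with hdddef
  set Ku : ℝ × ℝ → ℝ := fun p => -cext (dd p) / (lam + mu) + β * Φ (dd p, p.1 - p.2) with hKudef
  set Kv : ℝ × ℝ → ℝ := fun p => (lam * r / mu) * U (p.1 - p.2) with hKvdef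
  have hKu0 : ∀ y : ℝ, Ku (y, 0) = U y := by
    intro y
    rw [hKudef, hUdef, hdddef]
    simp only [mul_zero, add_zero, sub_zero]
  have hddC : ContDiff ℝ 1 dd :=
    (contDiff_const.mul contDiff_fst).add (contDiff_const.mul contDiff_snd)
  have hKuC : ContDiff ℝ 1 Ku := by
    apply ContDiff.add
    · exact ((hce.comp hddC).neg).div_const _
    · exact contDiff_const.mul (hΦC.comp (hddC.prodMk (contDiff_fst.sub contDiff_snd)))
  have hKvC : ContDiff ℝ 1 Kv :=
    contDiff_const.mul (hUC.comp (contDiff_fst.sub contDiff_snd))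
  -- derivative structure of Ku
  have hddD : ∀ p : ℝ × ℝ, HasFDerivAt dd
      (κ • ContinuousLinearMap.fst ℝ ℝ ℝ + κ' • ContinuousLinearMap.snd ℝ ℝ ℝ) p := by
    intro p
    exact (hasFDerivAt_fst.const_mul κ).add (hasFDerivAt_snd.const_mul κ')
  have hsubD : ∀ p : ℝ × ℝ, HasFDerivAt (fun p : ℝ × ℝ => p.1 - p.2)
      (ContinuousLinearMap.fst ℝ ℝ ℝ - ContinuousLinearMap.snd ℝ ℝ ℝ) p := fun p =>
    hasFDerivAt_fst.sub hasFDerivAt_snd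
  have hKuD : ∀ p : ℝ × ℝ, HasFDerivAt Ku
      ((-deriv cext (dd p) / (lam + mu)) •
          (κ • ContinuousLinearMap.fst ℝ ℝ ℝ + κ' • ContinuousLinearMap.snd ℝ ℝ ℝ)
        + β • (((∫ s in (0:ℝ)..(p.1 - p.2), g' (dd p) s) • ContinuousLinearMap.fst ℝ ℝ ℝ
            + (g (dd p) (p.1 - p.2)) • ContinuousLinearMap.snd ℝ ℝ ℝ).comp
            ((κ • ContinuousLinearMap.fst ℝ ℝ ℝ + κ' • ContinuousLinearMap.snd ℝ ℝ ℝ).prod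
              (ContinuousLinearMap.fst ℝ ℝ ℝ - ContinuousLinearMap.snd ℝ ℝ ℝ)))) p := by
    intro p
    have hcd : HasDerivAt (fun z => -cext z / (lam + mu))
        (-deriv cext (dd p) / (lam + mu)) (dd p) :=
      ((hce.differentiable one_ne_zero (dd p)).hasDerivAt.neg).div_const _
    have hA := hcd.comp_hasFDerivAt p (hddD p)
    have hm := (hddD p).prodMk (hsubD p)
    have hcomp := (hΦD (dd p, p.1 - p.2)).comp p hm
    exact hA.add (hcomp.const_mul β)
  have hKvD : ∀ p : ℝ × ℝ, HasFDerivAt Kv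
      (((lam * r / mu) * deriv U (p.1 - p.2)) •
        (ContinuousLinearMap.fst ℝ ℝ ℝ - ContinuousLinearMap.snd ℝ ℝ ℝ)) p := by
    intro p
    have h1 : HasDerivAt (fun z => (lam * r / mu) * U z)
        ((lam * r / mu) * deriv U (p.1 - p.2)) (p.1 - p.2) :=
      ((hUC.differentiable one_ne_zero (p.1 - p.2)).hasDerivAt).const_mul _
    have := h1.comp_hasFDerivAt p (hsubD p)
    exact this
  refine ⟨Ku, Kv, hKuC.contDiffOn, hKvC.contDiffOn, ?_, ?_, ?_, ?_⟩
  · -- Ku PDE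
    intro p hp
    obtain ⟨hp1, hp2, hp3⟩ := hp
    have hx01 : p.1 - p.2 ∈ Icc (0:ℝ) 1 := ⟨by linarith, by linarith⟩
    have hfw := DifferentiableAt.fderivWithin (hKuD p).differentiableAt
      (uniqueDiffOn_Tri p ⟨hp1, hp2, hp3⟩)
    rw [hfw, (hKuD p).fderiv]
    have hargp : dd p - κ * (p.1 - p.2) = p.2 := by
      rw [hdddef]; simp only; rw [hκ, hκ']; field_simp; ring
    have hb : g (dd p) (p.1 - p.2) = chat p.2 * u (p.1 - p.2) := by
      rw [hgdef]
      simp only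
      rw [hargp, hceq p.2 ⟨hp1, by linarith⟩]
    have hKvval : Kv p = (lam * r / mu) * u (p.1 - p.2) := by
      rw [hKvdef]
      simp only
      rw [hUu _ hx01]
    simp only [ContinuousLinearMap.add_apply, ContinuousLinearMap.coe_smul', Pi.smul_apply,
      ContinuousLinearMap.coe_comp', Function.comp_apply, ContinuousLinearMap.prod_apply,
      ContinuousLinearMap.coe_fst', ContinuousLinearMap.coe_snd', ContinuousLinearMap.coe_sub',
      Pi.sub_apply, smul_eq_mul]
    rw [hb, hKvval]
    rw [hκ, hκ', hβ]
    field_simp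
    ring
  · -- Kv PDE
    intro p hp
    have hfw := DifferentiableAt.fderivWithin (hKvD p).differentiableAt (uniqueDiffOn_Tri p hp)
    rw [hfw, (hKvD p).fderiv]
    simp only [ContinuousLinearMap.coe_smul', Pi.smul_apply, ContinuousLinearMap.coe_sub',
      Pi.sub_apply, ContinuousLinearMap.coe_fst', ContinuousLinearMap.coe_snd', smul_eq_mul]
    ring
  · -- diagonal boundary condition
    intro x hx
    have hdx : dd (x, x) = x := by
      rw [hdddef]; simp only; rw [hκ, hκ']; field_simp
    rw [hKudef]
    simp only
    rw [hdx, hceq x hx]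
    have : Φ (x, x - x) = 0 := by
      rw [hΦdef]; simp only [sub_self]; exact intervalIntegral.integral_same
    rw [this]
    ring_nf
  · -- left boundary condition
    intro x hx
    rw [hKu0 x, hKvdef]
    simp only [sub_zero]

end Existence
section Identities

noncomputable def ddf (lam mu : ℝ) (p : ℝ × ℝ) : ℝ :=
  lam / (lam + mu) * p.1 + mu / (lam + mu) * p.2

variable {lam mu r : ℝ} {chat : ℝ → ℝ} {Ku Kv : ℝ × ℝ → ℝ}

lemma Kv_transport (hmu : 0 < mu) (hs : IsKernelSol lam mu r chat Ku Kv) :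
    ∀ p ∈ Tri, Kv p = Kv (p.1 - p.2, 0) := by
  obtain ⟨hKuC, hKvC, hKupde, hKvpde, hbd, hbl⟩ := hs
  intro p hp
  obtain ⟨hp1, hp2, hp3⟩ := hp
  set γ : ℝ → ℝ × ℝ := fun t => (p.1 - p.2 + t, t) with hγ
  have hγmem : ∀ t ∈ Icc (0:ℝ) p.2, γ t ∈ Tri := by
    intro t ht
    refine ⟨ht.1, by simp only [hγ]; linarith, by simp only [hγ]; linarith [ht.2]⟩
  have hγc : Continuous γ := (continuous_const.add continuous_id).prodMk continuous_id
  have hcont : ContinuousOn (fun t => Kv (γ t)) (Icc 0 p.2) :=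
    (hKvC.continuousOn).comp hγc.continuousOn hγmem
  have hder : ∀ t ∈ Icc (0:ℝ) p.2, HasDerivWithinAt (fun t => Kv (γ t)) 0 (Icc 0 p.2) t := by
    intro t ht
    have hD := (hKvC.differentiableOn one_ne_zero _ (hγmem t ht)).hasFDerivWithinAt
    have hγd : HasDerivWithinAt γ ((1:ℝ), (1:ℝ)) (Icc 0 p.2) t := by
      exact (((hasDerivAt_id t).const_add (p.1 - p.2)).prodMk (hasDerivAt_id t)).hasDerivWithinAt
    have hcomp := hD.comp_hasDerivWithinAt t hγd hγmem
    have hval : (fderivWithin ℝ Kv Tri (γ t)) ((1:ℝ), (1:ℝ)) = 0 := by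
      have hsplit : ((1:ℝ), (1:ℝ)) = ((1:ℝ), (0:ℝ)) + ((0:ℝ), (1:ℝ)) := by norm_num
      rw [hsplit, map_add]
      have hpde := hKvpde (γ t) (hγmem t ht)
      have h0 : mu * ((fderivWithin ℝ Kv Tri (γ t)) (1, 0)
          + (fderivWithin ℝ Kv Tri (γ t)) (0, 1)) = 0 := by linarith
      rcases mul_eq_zero.1 h0 with h | h
      · exact absurd h (ne_of_gt hmu)
      · exact h
    rwa [hval] at hcomp
  have hconst := constant_of_has_deriv_right_zero hcont (fun t ht => by
    refine (hder t ⟨ht.1, le_of_lt ht.2⟩).mono_of_mem_nhdsWithin ?_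
    refine mem_nhdsWithin.2 ⟨Iio p.2, isOpen_Iio, ht.2, ?_⟩
    rintro z ⟨hz1, hz2⟩
    rw [mem_Iio] at hz1
    rw [mem_Ici] at hz2
    exact ⟨le_trans ht.1 hz2, le_of_lt hz1⟩)
  have := hconst p.2 ⟨hp1, le_refl _⟩
  simp only [hγ] at this
  rw [show p.1 - p.2 + p.2 = p.1 by ring] at this
  rw [show p.1 - p.2 + 0 = p.1 - p.2 by ring] at this
  rw [← this]

lemma Ku_characteristic (hlam : 0 < lam) (hmu : 0 < mu)
    (hchat : ContDiffOn ℝ 1 chat (Icc 0 1)) (hs : IsKernelSol lam mu r chat Ku Kv) :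
    ∀ p ∈ Tri, Ku p = - chat (ddf lam mu p) / (lam + mu)
      + ∫ t in (0:ℝ)..((p.1 - p.2) / (lam + mu)),
          chat (ddf lam mu p - lam * t) * Kv (ddf lam mu p + mu * t, ddf lam mu p - lam * t) := by
  obtain ⟨hKuC, hKvC, hKupde, hKvpde, hbd, hbl⟩ := hs
  intro p hp
  obtain ⟨hp1, hp2, hp3⟩ := hp
  have hSg : (0:ℝ) < lam + mu := by linarith
  set d : ℝ := ddf lam mu p with hd
  set T : ℝ := (p.1 - p.2) / (lam + mu) with hT
  have hT0 : 0 ≤ T := by apply div_nonneg; linarith; linarith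
  have hdT1 : d + mu * T = p.1 := by rw [hd, hT, ddf]; field_simp; ring
  have hdT2 : d - lam * T = p.2 := by rw [hd, hT, ddf]; field_simp; ring
  have hd2 : p.2 ≤ d := by nlinarith
  have hd1 : d ≤ p.1 := by nlinarith
  set γ : ℝ → ℝ × ℝ := fun t => (d + mu * t, d - lam * t) with hγ
  have hγmem : ∀ t ∈ Icc (0:ℝ) T, γ t ∈ Tri := by
    intro t ht
    have h1 := ht.1
    have h2 := ht.2
    refine ⟨?_, ?_, ?_⟩
    · show (0:ℝ) ≤ d - lam * t
      nlinarith
    · show d - lam * t ≤ d + mu * t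
      nlinarith
    · show d + mu * t ≤ 1
      nlinarith
  have hγc : Continuous γ :=
    (continuous_const.add (continuous_const.mul continuous_id)).prodMk
      (continuous_const.sub (continuous_const.mul continuous_id))
  have hcont : ContinuousOn (fun t => Ku (γ t)) (Icc 0 T) :=
    (hKuC.continuousOn).comp hγc.continuousOn hγmem
  have hder : ∀ t ∈ Icc (0:ℝ) T, HasDerivWithinAt (fun t => Ku (γ t))
      (chat (d - lam * t) * Kv (γ t)) (Icc 0 T) t := by
    intro t ht
    have hD := (hKuC.differentiableOn one_ne_zero _ (hγmem t ht)).hasFDerivWithinAt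
    have hγd : HasDerivWithinAt γ ((mu:ℝ), (-lam:ℝ)) (Icc 0 T) t := by
      have h1 : HasDerivAt (fun t : ℝ => d + mu * t) mu t := by
        simpa using ((hasDerivAt_id t).const_mul mu).const_add d
      have h2 : HasDerivAt (fun t : ℝ => d - lam * t) (-lam) t := by
        simpa using ((hasDerivAt_id t).const_mul lam).const_sub d
      exact (h1.prodMk h2).hasDerivWithinAt
    have hcomp := hD.comp_hasDerivWithinAt t hγd hγmem
    have hval : (fderivWithin ℝ Ku Tri (γ t)) ((mu:ℝ), (-lam:ℝ))
        = chat (d - lam * t) * Kv (γ t) := by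
      have hsplit : ((mu:ℝ), (-lam:ℝ))
          = mu • ((1:ℝ), (0:ℝ)) + (-lam) • ((0:ℝ), (1:ℝ)) := by
        simp [Prod.ext_iff]
      rw [hsplit, map_add, (fderivWithin ℝ Ku Tri (γ t)).map_smul,
        (fderivWithin ℝ Ku Tri (γ t)).map_smul, smul_eq_mul, smul_eq_mul]
      have hpde := hKupde (γ t) (hγmem t ht)
      have : (γ t).2 = d - lam * t := rfl
      rw [this] at hpde
      linarith
    rwa [hval] at hcomp
  have hint : IntervalIntegrable (fun t => chat (d - lam * t) * Kv (γ t)) volume 0 T := by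
    apply ContinuousOn.intervalIntegrable
    rw [uIcc_of_le hT0]
    apply ContinuousOn.mul
    · apply hchat.continuousOn.comp
        ((continuous_const.sub (continuous_const.mul continuous_id)).continuousOn)
      intro t ht
      constructor
      · have := (hγmem t ht).1
        simpa [hγ] using this
      · have h2 := (hγmem t ht).2.1
        have h3 := (hγmem t ht).2.2
        simp only [hγ] at h2 h3
        show d - lam * t ≤ 1
        linarith
    · exact (hKvC.continuousOn).comp hγc.continuousOn hγmem
  have hFTC := intervalIntegral.integral_eq_sub_of_hasDeriv_right_of_le hT0 hcont
    (fun t ht => by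
      refine (hder t ⟨le_of_lt ht.1, le_of_lt ht.2⟩).mono_of_mem_nhdsWithin ?_
      refine mem_nhdsWithin.2 ⟨Iio T, isOpen_Iio, ht.2, ?_⟩
      rintro z ⟨hz1, hz2⟩
      rw [mem_Iio] at hz1
      rw [mem_Ioi] at hz2
      exact ⟨le_of_lt (lt_trans ht.1 hz2), le_of_lt hz1⟩) hint
  have hγT : γ T = p := by
    rw [hγ]; simp only; rw [hdT1, hdT2]
  have hγ0 : γ 0 = (d, d) := by
    rw [hγ]; simp only [mul_zero, add_zero, sub_zero]
  rw [hγT, hγ0] at hFTC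
  have hdmem : d ∈ Icc (0:ℝ) 1 := ⟨by linarith, by linarith⟩
  have hKudd : Ku (d, d) = - chat d / (lam + mu) := hbd d hdmem
  rw [hKudd] at hFTC
  have : ∀ t, Kv (γ t) = Kv (d + mu * t, d - lam * t) := fun t => rfl
  rw [show (∫ t in (0:ℝ)..T, chat (d - lam * t) * Kv (d + mu * t, d - lam * t))
      = Ku p - (- chat d / (lam + mu)) from hFTC]
  ring

end Identities
section Gronwall

lemma gronwallBound_mono' {K e : ℝ} (hK : 0 ≤ K) (he : 0 ≤ e) {x y : ℝ} (hxy : x ≤ y) :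
    gronwallBound 0 K e x ≤ gronwallBound 0 K e y := by
  rcases eq_or_ne K 0 with h | h
  · subst h
    rw [gronwallBound_K0]
    simp only [zero_add]
    nlinarith
  · rw [gronwallBound_of_K_ne_0 h]
    simp only [zero_mul, zero_add]
    have hK' : 0 < K := lt_of_le_of_ne hK (Ne.symm h)
    have hexp : Real.exp (K * x) ≤ Real.exp (K * y) := Real.exp_le_exp.2 (by nlinarith)
    have h2 : 0 ≤ e / K := by positivity
    nlinarith

lemma volterra_bound {W : ℝ → ℝ} {a0 b0 S : ℝ} (hW : Continuous W)
    (hWnn : ∀ y, 0 ≤ W y) (ha : 0 ≤ a0) (hb : 0 ≤ b0) (hS : 0 < S)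
    (h : ∀ x ∈ Icc (0:ℝ) (1/S), W (S * x) ≤ a0 + b0 * ∫ t in (0:ℝ)..x, W (S * t)) :
    ∀ y ∈ Icc (0:ℝ) 1, W y ≤ a0 + b0 * gronwallBound 0 b0 a0 (1/S) := by
  set F : ℝ → ℝ := fun x => ∫ t in (0:ℝ)..x, W (S * t) with hFdef
  have hWc : Continuous fun t => W (S * t) := hW.comp (continuous_const.mul continuous_id)
  have hF' : ∀ x, HasDerivAt F (W (S * x)) x := fun x =>
    intervalIntegral.integral_hasDerivAt_right (hWc.intervalIntegrable _ _)
      (hWc.stronglyMeasurableAtFilter _ _) hWc.continuousAt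
  have hFnn : ∀ x, 0 ≤ x → 0 ≤ F x := fun x hx =>
    intervalIntegral.integral_nonneg hx fun t _ => hWnn _
  have hF0 : F 0 = 0 := intervalIntegral.integral_same
  have hgr := norm_le_gronwallBound_of_norm_deriv_right_le (f := F)
    (f' := fun x => W (S * x)) (δ := 0) (K := b0) (ε := a0) (a := 0) (b := 1/S)
    (fun x _ => (hF' x).continuousAt.continuousWithinAt)
    (fun x _ => (hF' x).hasDerivWithinAt)
    (by rw [hF0]; simp)
    (fun x hx => by
      have hh := h x ⟨hx.1, le_of_lt hx.2⟩
      rw [Real.norm_eq_abs, abs_of_nonneg (hWnn _), Real.norm_eq_abs,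
        abs_of_nonneg (hFnn x hx.1)]
      linarith)
  intro y hy
  have hx : y / S ∈ Icc (0:ℝ) (1/S) := by
    constructor
    · exact div_nonneg hy.1 (le_of_lt hS)
    · gcongr
      exact hy.2
  have hSy : S * (y / S) = y := by field_simp
  have h1 := h (y / S) hx
  rw [hSy] at h1
  have h2 := hgr (y / S) hx
  rw [Real.norm_eq_abs, abs_of_nonneg (hFnn _ hx.1)] at h2
  rw [sub_zero] at h2
  have h3 : gronwallBound 0 b0 a0 (y / S) ≤ gronwallBound 0 b0 a0 (1/S) :=
    gronwallBound_mono' hb ha hx.2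
  calc W y ≤ a0 + b0 * F (y / S) := h1
    _ ≤ a0 + b0 * gronwallBound 0 b0 a0 (1/S) := by nlinarith

end Gronwall
section SolEst

noncomputable def UbarD (lam mu cbar r : ℝ) : ℝ :=
  cbar / (lam + mu) + (cbar * (lam * |r| / mu)) * gronwallBound 0 (cbar * (lam * |r| / mu))
    (cbar / (lam + mu)) (1 / (lam + mu))

variable {lam mu r cbar : ℝ} {chat : ℝ → ℝ} {Ku Kv : ℝ × ℝ → ℝ}

lemma gam_mem (hlam : 0 < lam) (hmu : 0 < mu) {p : ℝ × ℝ} (hp : p ∈ Tri) {t : ℝ}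
    (ht : t ∈ Icc (0:ℝ) ((p.1 - p.2) / (lam + mu))) :
    (ddf lam mu p + mu * t, ddf lam mu p - lam * t) ∈ Tri
      ∧ ddf lam mu p - lam * t ∈ Icc (0:ℝ) 1
      ∧ (lam + mu) * t ∈ Icc (0:ℝ) 1 := by
  obtain ⟨hp1, hp2, hp3⟩ := hp
  have hSg : (0:ℝ) < lam + mu := by linarith
  have ht1 := ht.1
  have ht2 : t * (lam + mu) ≤ p.1 - p.2 := by
    have h := ht.2
    rwa [le_div_iff₀ hSg] at h
  have ht2' : (0:ℝ) ≤ p.1 - p.2 - t * (lam + mu) := by linarith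
  have hA : ddf lam mu p * (lam + mu) = lam * p.1 + mu * p.2 := by
    rw [ddf]; field_simp
    all_goals ring
  have hd2 : p.2 ≤ ddf lam mu p := by
    nlinarith [hA, mul_nonneg hlam.le (sub_nonneg.2 hp2), hSg]
  have hd1 : ddf lam mu p ≤ p.1 := by
    nlinarith [hA, mul_nonneg hmu.le (sub_nonneg.2 hp2), hSg]
  have hdT2 : p.2 ≤ ddf lam mu p - lam * t := by
    nlinarith [hA, mul_nonneg hlam.le ht2', hSg]
  have hdT1 : ddf lam mu p + mu * t ≤ p.1 := by
    nlinarith [hA, mul_nonneg hmu.le ht2', hSg]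
  refine ⟨⟨?_, ?_, ?_⟩, ⟨?_, ?_⟩, ?_, ?_⟩
  · show (0:ℝ) ≤ ddf lam mu p - lam * t; linarith
  · show ddf lam mu p - lam * t ≤ ddf lam mu p + mu * t
    nlinarith [mul_nonneg hlam.le ht1, mul_nonneg hmu.le ht1]
  · show ddf lam mu p + mu * t ≤ 1; linarith
  · linarith
  · linarith [mul_nonneg hlam.le ht1]
  · positivity
  · linarith

lemma gam_continuousOn {d x : ℝ} (hKvC : ContDiffOn ℝ 1 Kv Tri)
    (hmem : ∀ t ∈ Icc (0:ℝ) x, (d + mu * t, d - lam * t) ∈ Tri)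
    (hargmem : ∀ t ∈ Icc (0:ℝ) x, d - lam * t ∈ Icc (0:ℝ) 1)
    (hchat : ContDiffOn ℝ 1 chat (Icc 0 1)) :
    ContinuousOn (fun t => chat (d - lam * t) * Kv (d + mu * t, d - lam * t)) (Icc 0 x) := by
  apply ContinuousOn.mul
  · exact hchat.continuousOn.comp
      ((continuous_const.sub (continuous_const.mul continuous_id)).continuousOn) hargmem
  · exact hKvC.continuousOn.comp
      (((continuous_const.add (continuous_const.mul continuous_id)).prodMk
        (continuous_const.sub (continuous_const.mul continuous_id))).continuousOn) hmem

lemma edge_trace_key (hlam : 0 < lam) (hmu : 0 < mu)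
    (hchat : ContDiffOn ℝ 1 chat (Icc 0 1))
    (hs : IsKernelSol lam mu r chat Ku Kv) {Ku' Kv' : ℝ × ℝ → ℝ}
    (hs' : IsKernelSol lam mu r chat Ku' Kv') {x : ℝ}
    (hx : x ∈ Icc (0:ℝ) (1 / (lam + mu))) :
    Ku ((lam + mu) * x, 0) - Ku' ((lam + mu) * x, 0)
      = ∫ t in (0:ℝ)..x, chat (ddf lam mu ((lam + mu) * x, 0) - lam * t)
          * (Kv (ddf lam mu ((lam + mu) * x, 0) + mu * t,
              ddf lam mu ((lam + mu) * x, 0) - lam * t)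
            - Kv' (ddf lam mu ((lam + mu) * x, 0) + mu * t,
              ddf lam mu ((lam + mu) * x, 0) - lam * t)) := by
  have hSg : (0:ℝ) < lam + mu := by linarith
  have hy01 : (lam + mu) * x ∈ Icc (0:ℝ) 1 := by
    constructor
    · exact mul_nonneg (le_of_lt hSg) hx.1
    · calc (lam + mu) * x ≤ (lam + mu) * (1 / (lam + mu)) := by
            exact mul_le_mul_of_nonneg_left hx.2 (le_of_lt hSg)
        _ = 1 := by field_simp
  have hpT : (((lam + mu) * x : ℝ), (0:ℝ)) ∈ Tri := ⟨le_refl 0, hy01.1, hy01.2⟩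
  have hid := Ku_characteristic hlam hmu hchat hs _ hpT
  have hid' := Ku_characteristic hlam hmu hchat hs' _ hpT
  have hTx : (((lam + mu) * x : ℝ) - 0) / (lam + mu) = x := by
      rw [sub_zero]; exact mul_div_cancel_left₀ x hSg.ne'
  rw [hTx] at hid hid'
  set d : ℝ := ddf lam mu (((lam + mu) * x : ℝ), (0:ℝ)) with hd
  have hmem : ∀ t ∈ Icc (0:ℝ) x, (d + mu * t, d - lam * t) ∈ Tri := by
    intro t ht
    have ht' : t ∈ Icc (0:ℝ) (((((lam+mu)*x : ℝ), (0:ℝ)).1 - (((lam+mu)*x : ℝ), (0:ℝ)).2)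
        / (lam + mu)) := by
      rw [show ((((lam+mu)*x : ℝ), (0:ℝ)).1 - (((lam+mu)*x : ℝ), (0:ℝ)).2) / (lam + mu) = x
        from hTx]
      exact ht
    exact (gam_mem hlam hmu hpT ht').1
  have hargmem : ∀ t ∈ Icc (0:ℝ) x, d - lam * t ∈ Icc (0:ℝ) 1 := by
    intro t ht
    have ht' : t ∈ Icc (0:ℝ) (((((lam+mu)*x : ℝ), (0:ℝ)).1 - (((lam+mu)*x : ℝ), (0:ℝ)).2)
        / (lam + mu)) := by
      rw [show ((((lam+mu)*x : ℝ), (0:ℝ)).1 - (((lam+mu)*x : ℝ), (0:ℝ)).2) / (lam + mu) = x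
        from hTx]
      exact ht
    exact (gam_mem hlam hmu hpT ht').2.1
  have hint1 : IntervalIntegrable
      (fun t => chat (d - lam * t) * Kv (d + mu * t, d - lam * t)) volume 0 x := by
    apply ContinuousOn.intervalIntegrable
    rw [uIcc_of_le hx.1]
    exact gam_continuousOn hs.2.1 hmem hargmem hchat
  have hint2 : IntervalIntegrable
      (fun t => chat (d - lam * t) * Kv' (d + mu * t, d - lam * t)) volume 0 x := by
    apply ContinuousOn.intervalIntegrable
    rw [uIcc_of_le hx.1]
    exact gam_continuousOn hs'.2.1 hmem hargmem hchat
  rw [hid, hid']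
  rw [show (-chat d / (lam + mu) + ∫ t in (0:ℝ)..x, chat (d - lam*t) * Kv (d + mu*t, d - lam*t))
      - (-chat d / (lam + mu) + ∫ t in (0:ℝ)..x, chat (d - lam*t) * Kv' (d + mu*t, d - lam*t))
      = (∫ t in (0:ℝ)..x, chat (d - lam*t) * Kv (d + mu*t, d - lam*t))
        - ∫ t in (0:ℝ)..x, chat (d - lam*t) * Kv' (d + mu*t, d - lam*t) by ring]
  rw [← intervalIntegral.integral_sub hint1 hint2]
  exact intervalIntegral.integral_congr fun t _ => by ring

end SolEst
section Final

noncomputable def KvBD (lam mu cbar r : ℝ) : ℝ := lam * |r| / mu * UbarD lam mu cbar r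
noncomputable def KuBD (lam mu cbar r : ℝ) : ℝ :=
  cbar / (lam + mu) + cbar * KvBD lam mu cbar r * (1 / (lam + mu))

variable {lam mu r cbar : ℝ} {chat : ℝ → ℝ} {Ku Kv : ℝ × ℝ → ℝ}

lemma gam_continuousOn' {F : ℝ × ℝ → ℝ} {d x : ℝ} (hF : ContinuousOn F Tri)
    (hmem : ∀ t ∈ Icc (0:ℝ) x, (d + mu * t, d - lam * t) ∈ Tri)
    (hargmem : ∀ t ∈ Icc (0:ℝ) x, d - lam * t ∈ Icc (0:ℝ) 1)
    (hchat : ContDiffOn ℝ 1 chat (Icc 0 1)) :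
    ContinuousOn (fun t => chat (d - lam * t) * F (d + mu * t, d - lam * t)) (Icc 0 x) := by
  apply ContinuousOn.mul
  · exact hchat.continuousOn.comp
      ((continuous_const.sub (continuous_const.mul continuous_id)).continuousOn) hargmem
  · exact hF.comp
      (((continuous_const.add (continuous_const.mul continuous_id)).prodMk
        (continuous_const.sub (continuous_const.mul continuous_id))).continuousOn) hmem

lemma UbarD_nonneg (hlam : 0 < lam) (hmu : 0 < mu) (hcbar : 0 < cbar) :
    0 ≤ UbarD lam mu cbar r := by
  have hSg : (0:ℝ) < lam + mu := by linarith
  have ha0 : (0:ℝ) ≤ cbar / (lam + mu) := by positivity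
  have hb0 : (0:ℝ) ≤ cbar * (lam * |r| / mu) := by positivity
  have hgb : 0 ≤ gronwallBound 0 (cbar * (lam * |r| / mu)) (cbar / (lam + mu))
      (1 / (lam + mu)) := by
    have h0 := gronwallBound_x0 (0:ℝ) (cbar * (lam * |r| / mu)) (cbar / (lam + mu))
    have := gronwallBound_mono' hb0 ha0 (le_of_lt (by positivity : (0:ℝ) < 1 / (lam + mu)))
    linarith
  rw [UbarD]
  positivity

lemma sol_Kv_eq (hlam : 0 < lam) (hmu : 0 < mu) (hs : IsKernelSol lam mu r chat Ku Kv) :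
    ∀ p ∈ Tri, Kv p = lam * r / mu * Ku (p.1 - p.2, 0) := by
  intro p hp
  obtain ⟨hp1, hp2, hp3⟩ := hp
  rw [Kv_transport hmu hs p ⟨hp1, hp2, hp3⟩]
  exact hs.2.2.2.2.2 (p.1 - p.2) ⟨by linarith, by linarith⟩

lemma edge_trace_bound (hlam : 0 < lam) (hmu : 0 < mu) (hcbar : 0 < cbar)
    (hchat : ContDiffOn ℝ 1 chat (Icc 0 1)) (hchatb : ∀ x ∈ Icc (0:ℝ) 1, |chat x| ≤ cbar)
    (hs : IsKernelSol lam mu r chat Ku Kv) :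
    ∀ y ∈ Icc (0:ℝ) 1, |Ku (y, 0)| ≤ UbarD lam mu cbar r := by
  have hSg : (0:ℝ) < lam + mu := by linarith
  set a0 : ℝ := cbar / (lam + mu) with ha0
  set b0 : ℝ := cbar * (lam * |r| / mu) with hb0
  have ha0p : (0:ℝ) ≤ a0 := by positivity
  have hb0p : (0:ℝ) ≤ b0 := by positivity
  set W : ℝ → ℝ := fun y => |Ku (cl01 y, 0)| with hW
  have hWmem : ∀ y : ℝ, ((cl01 y : ℝ), (0:ℝ)) ∈ Tri :=
    fun y => ⟨le_refl 0, (cl01_mem y).1, (cl01_mem y).2⟩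
  have hWc : Continuous W :=
    ((hs.1.continuousOn).comp_continuous
      (cl01_continuous.prodMk continuous_const) hWmem).abs
  have hWnn : ∀ y, 0 ≤ W y := fun y => abs_nonneg _
  have key : ∀ x ∈ Icc (0:ℝ) (1 / (lam + mu)),
      W ((lam + mu) * x) ≤ a0 + b0 * ∫ t in (0:ℝ)..x, W ((lam + mu) * t) := by
    intro x hx
    have hy01 : (lam + mu) * x ∈ Icc (0:ℝ) 1 := by
      constructor
      · exact mul_nonneg (le_of_lt hSg) hx.1
      · calc (lam + mu) * x ≤ (lam + mu) * (1 / (lam + mu)) :=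
              mul_le_mul_of_nonneg_left hx.2 (le_of_lt hSg)
          _ = 1 := by field_simp
    have hpT : (((lam + mu) * x : ℝ), (0:ℝ)) ∈ Tri := ⟨le_refl 0, hy01.1, hy01.2⟩
    have hid := Ku_characteristic hlam hmu hchat hs _ hpT
    have hTx : (((lam + mu) * x : ℝ) - 0) / (lam + mu) = x := by
      rw [sub_zero]; exact mul_div_cancel_left₀ x hSg.ne'
    rw [hTx] at hid
    set d : ℝ := ddf lam mu (((lam + mu) * x : ℝ), (0:ℝ)) with hd
    have hmemx : ∀ t ∈ Icc (0:ℝ) x, t ∈ Icc (0:ℝ)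
        (((((lam+mu)*x : ℝ), (0:ℝ)).1 - (((lam+mu)*x : ℝ), (0:ℝ)).2) / (lam + mu)) := by
      intro t ht
      rw [show ((((lam+mu)*x : ℝ), (0:ℝ)).1 - (((lam+mu)*x : ℝ), (0:ℝ)).2) / (lam + mu) = x
        from hTx]
      exact ht
    have hmem : ∀ t ∈ Icc (0:ℝ) x, (d + mu * t, d - lam * t) ∈ Tri :=
      fun t ht => (gam_mem hlam hmu hpT (hmemx t ht)).1
    have hargmem : ∀ t ∈ Icc (0:ℝ) x, d - lam * t ∈ Icc (0:ℝ) 1 :=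
      fun t ht => (gam_mem hlam hmu hpT (hmemx t ht)).2.1
    have hStmem : ∀ t ∈ Icc (0:ℝ) x, (lam + mu) * t ∈ Icc (0:ℝ) 1 :=
      fun t ht => (gam_mem hlam hmu hpT (hmemx t ht)).2.2
    have hptw : ∀ t ∈ Icc (0:ℝ) x,
        |chat (d - lam * t) * Kv (d + mu * t, d - lam * t)| ≤ b0 * W ((lam + mu) * t) := by
      intro t ht
      have htr := sol_Kv_eq hlam hmu hs _ (hmem t ht)
      rw [show ((d + mu * t, d - lam * t) : ℝ × ℝ).1 - ((d + mu * t, d - lam * t) : ℝ × ℝ).2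
        = (lam + mu) * t by show (d + mu * t) - (d - lam * t) = (lam + mu) * t; ring] at htr
      rw [htr, abs_mul, abs_mul]
      have hWt : W ((lam + mu) * t) = |Ku ((lam + mu) * t, 0)| := by
        rw [hW]; simp only; rw [cl01_of_mem (hStmem t ht)]
      rw [hWt]
      have h1 : |chat (d - lam * t)| ≤ cbar := hchatb _ (hargmem t ht)
      have h2 : |lam * r / mu| = lam * |r| / mu := by
        rw [abs_div, abs_mul, abs_of_pos hlam, abs_of_pos hmu]
      rw [h2, hb0]
      calc |chat (d - lam * t)| * (lam * |r| / mu * |Ku ((lam + mu) * t, 0)|)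
          ≤ cbar * (lam * |r| / mu * |Ku ((lam + mu) * t, 0)|) := by
            apply mul_le_mul_of_nonneg_right h1 (by positivity)
        _ = cbar * (lam * |r| / mu) * |Ku ((lam + mu) * t, 0)| := by ring
    have hWSx : W ((lam + mu) * x) = |Ku ((lam + mu) * x, 0)| := by
      rw [hW]; simp only; rw [cl01_of_mem hy01]
    have hcontf : ContinuousOn
        (fun t => chat (d - lam * t) * Kv (d + mu * t, d - lam * t)) (Icc 0 x) :=
      gam_continuousOn' hs.2.1.continuousOn hmem hargmem hchat
    have hintf : IntervalIntegrable
        (fun t => chat (d - lam * t) * Kv (d + mu * t, d - lam * t)) volume 0 x := by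
      apply ContinuousOn.intervalIntegrable
      rwa [uIcc_of_le hx.1]
    have hintW : IntervalIntegrable (fun t => b0 * W ((lam + mu) * t)) volume 0 x :=
      (continuous_const.mul (hWc.comp (continuous_const.mul continuous_id))).intervalIntegrable _ _
    calc W ((lam + mu) * x) = |Ku ((lam + mu) * x, 0)| := hWSx
      _ = |(-chat d / (lam + mu))
          + ∫ t in (0:ℝ)..x, chat (d - lam * t) * Kv (d + mu * t, d - lam * t)| := by rw [hid]
      _ ≤ |(-chat d / (lam + mu))|
          + |∫ t in (0:ℝ)..x, chat (d - lam * t) * Kv (d + mu * t, d - lam * t)| := abs_add_le _ _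
      _ ≤ a0 + b0 * ∫ t in (0:ℝ)..x, W ((lam + mu) * t) := by
          apply add_le_add
          · have hd01 : d ∈ Icc (0:ℝ) 1 := by
              have := hargmem 0 ⟨le_refl 0, hx.1⟩
              rwa [mul_zero, sub_zero] at this
            rw [abs_div, abs_neg, abs_of_pos hSg]
            have h := hchatb d hd01
            rw [ha0]
            gcongr
          · calc |∫ t in (0:ℝ)..x, chat (d - lam * t) * Kv (d + mu * t, d - lam * t)|
                ≤ ∫ t in (0:ℝ)..x, |chat (d - lam * t) * Kv (d + mu * t, d - lam * t)| :=
                  intervalIntegral.abs_integral_le_integral_abs hx.1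
              _ ≤ ∫ t in (0:ℝ)..x, b0 * W ((lam + mu) * t) := by
                  apply intervalIntegral.integral_mono_on hx.1 _ hintW hptw
                  apply ContinuousOn.intervalIntegrable
                  rw [uIcc_of_le hx.1]
                  exact hcontf.abs
              _ = b0 * ∫ t in (0:ℝ)..x, W ((lam + mu) * t) :=
                  intervalIntegral.integral_const_mul _ _
  have hvb := volterra_bound hWc hWnn ha0p hb0p hSg key
  intro y hy
  have := hvb y hy
  rw [hW] at this
  simp only at this
  rwa [cl01_of_mem hy] at this

end Final
section Final2

variable {lam mu r cbar : ℝ} {chat : ℝ → ℝ} {Ku Kv : ℝ × ℝ → ℝ}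

lemma sol_bound (hlam : 0 < lam) (hmu : 0 < mu) (hcbar : 0 < cbar)
    (hchat : ContDiffOn ℝ 1 chat (Icc 0 1)) (hchatb : ∀ x ∈ Icc (0:ℝ) 1, |chat x| ≤ cbar)
    (hs : IsKernelSol lam mu r chat Ku Kv) :
    ∀ p ∈ Tri, |Ku p| ≤ KuBD lam mu cbar r ∧ |Kv p| ≤ KvBD lam mu cbar r := by
  have hSg : (0:ℝ) < lam + mu := by linarith
  have hKvBDnn : 0 ≤ KvBD lam mu cbar r := by
    rw [KvBD]
    exact mul_nonneg (by positivity) (UbarD_nonneg hlam hmu hcbar)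
  have hKvb : ∀ p ∈ Tri, |Kv p| ≤ KvBD lam mu cbar r := by
    intro p hp
    obtain ⟨hp1, hp2, hp3⟩ := hp
    rw [sol_Kv_eq hlam hmu hs p ⟨hp1, hp2, hp3⟩, abs_mul]
    have h2 : |lam * r / mu| = lam * |r| / mu := by
      rw [abs_div, abs_mul, abs_of_pos hlam, abs_of_pos hmu]
    rw [h2, KvBD]
    exact mul_le_mul_of_nonneg_left
      (edge_trace_bound hlam hmu hcbar hchat hchatb hs _ ⟨by linarith, by linarith⟩)
      (by positivity)
  intro p hp
  refine ⟨?_, hKvb p hp⟩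
  obtain ⟨hp1, hp2, hp3⟩ := hp
  have hpT : p ∈ Tri := ⟨hp1, hp2, hp3⟩
  have hid := Ku_characteristic hlam hmu hchat hs p hpT
  set d : ℝ := ddf lam mu p with hd
  set T : ℝ := (p.1 - p.2) / (lam + mu) with hT
  have hT0 : (0:ℝ) ≤ T := by rw [hT]; exact div_nonneg (by linarith) (le_of_lt hSg)
  have hT1 : T ≤ 1 / (lam + mu) := by
    rw [hT]
    have : p.1 - p.2 ≤ 1 := by linarith
    gcongr
  have hd01 : d ∈ Icc (0:ℝ) 1 := by
    have := (gam_mem hlam hmu hpT ⟨le_refl 0, hT0⟩).2.1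
    rwa [mul_zero, sub_zero] at this
  have hbint : ∀ t ∈ uIoc (0:ℝ) T,
      ‖chat (d - lam * t) * Kv (d + mu * t, d - lam * t)‖ ≤ cbar * KvBD lam mu cbar r := by
    intro t ht
    have ht' : t ∈ Icc (0:ℝ) T := by
      rw [uIoc_of_le hT0] at ht
      exact ⟨le_of_lt ht.1, ht.2⟩
    have hg := gam_mem hlam hmu hpT ht'
    rw [Real.norm_eq_abs, abs_mul]
    exact mul_le_mul (hchatb _ hg.2.1) (hKvb _ hg.1) (abs_nonneg _) (le_of_lt hcbar)
  have hIb := intervalIntegral.norm_integral_le_of_norm_le_const hbint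
  rw [Real.norm_eq_abs] at hIb
  calc |Ku p| = |(- chat d / (lam + mu))
        + ∫ t in (0:ℝ)..T, chat (d - lam * t) * Kv (d + mu * t, d - lam * t)| := by rw [hid]
    _ ≤ |(- chat d / (lam + mu))|
        + |∫ t in (0:ℝ)..T, chat (d - lam * t) * Kv (d + mu * t, d - lam * t)| := abs_add_le _ _
    _ ≤ cbar / (lam + mu) + cbar * KvBD lam mu cbar r * (1 / (lam + mu)) := by
        apply add_le_add
        · rw [abs_div, abs_neg, abs_of_pos hSg]
          have h := hchatb d hd01
          gcongr
        · refine le_trans hIb ?_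
          rw [sub_zero, abs_of_nonneg hT0]
          exact mul_le_mul_of_nonneg_left hT1 (mul_nonneg (le_of_lt hcbar) hKvBDnn)
    _ = KuBD lam mu cbar r := by rw [KuBD]

lemma sol_unique (hlam : 0 < lam) (hmu : 0 < mu) (hcbar : 0 < cbar)
    (hchat : ContDiffOn ℝ 1 chat (Icc 0 1)) (hchatb : ∀ x ∈ Icc (0:ℝ) 1, |chat x| ≤ cbar)
    {Ku' Kv' : ℝ × ℝ → ℝ} (hs : IsKernelSol lam mu r chat Ku Kv)
    (hs' : IsKernelSol lam mu r chat Ku' Kv') :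
    EqOn Ku Ku' Tri ∧ EqOn Kv Kv' Tri := by
  have hSg : (0:ℝ) < lam + mu := by linarith
  set b0 : ℝ := cbar * (lam * |r| / mu) with hb0
  have hb0p : (0:ℝ) ≤ b0 := by positivity
  set W : ℝ → ℝ := fun y => |Ku (cl01 y, 0) - Ku' (cl01 y, 0)| with hW
  have hWmem : ∀ y : ℝ, ((cl01 y : ℝ), (0:ℝ)) ∈ Tri :=
    fun y => ⟨le_refl 0, (cl01_mem y).1, (cl01_mem y).2⟩
  have hWc : Continuous W :=
    (((hs.1.continuousOn.sub hs'.1.continuousOn)).comp_continuous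
      (cl01_continuous.prodMk continuous_const) hWmem).abs
  have hWnn : ∀ y, 0 ≤ W y := fun y => abs_nonneg _
  have key : ∀ x ∈ Icc (0:ℝ) (1 / (lam + mu)),
      W ((lam + mu) * x) ≤ 0 + b0 * ∫ t in (0:ℝ)..x, W ((lam + mu) * t) := by
    intro x hx
    rw [zero_add]
    have hy01 : (lam + mu) * x ∈ Icc (0:ℝ) 1 := by
      constructor
      · exact mul_nonneg (le_of_lt hSg) hx.1
      · calc (lam + mu) * x ≤ (lam + mu) * (1 / (lam + mu)) :=
              mul_le_mul_of_nonneg_left hx.2 (le_of_lt hSg)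
          _ = 1 := by field_simp
    have hpT : (((lam + mu) * x : ℝ), (0:ℝ)) ∈ Tri := ⟨le_refl 0, hy01.1, hy01.2⟩
    have hkey := edge_trace_key hlam hmu hchat hs hs' hx
    have hTx : (((lam + mu) * x : ℝ) - 0) / (lam + mu) = x := by
      rw [sub_zero]; exact mul_div_cancel_left₀ x hSg.ne'
    set d : ℝ := ddf lam mu (((lam + mu) * x : ℝ), (0:ℝ)) with hd
    have hmemx : ∀ t ∈ Icc (0:ℝ) x, t ∈ Icc (0:ℝ)
        (((((lam+mu)*x : ℝ), (0:ℝ)).1 - (((lam+mu)*x : ℝ), (0:ℝ)).2) / (lam + mu)) := by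
      intro t ht
      rw [show ((((lam+mu)*x : ℝ), (0:ℝ)).1 - (((lam+mu)*x : ℝ), (0:ℝ)).2) / (lam + mu) = x
        from hTx]
      exact ht
    have hmem : ∀ t ∈ Icc (0:ℝ) x, (d + mu * t, d - lam * t) ∈ Tri :=
      fun t ht => (gam_mem hlam hmu hpT (hmemx t ht)).1
    have hargmem : ∀ t ∈ Icc (0:ℝ) x, d - lam * t ∈ Icc (0:ℝ) 1 :=
      fun t ht => (gam_mem hlam hmu hpT (hmemx t ht)).2.1
    have hStmem : ∀ t ∈ Icc (0:ℝ) x, (lam + mu) * t ∈ Icc (0:ℝ) 1 :=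
      fun t ht => (gam_mem hlam hmu hpT (hmemx t ht)).2.2
    have hptw : ∀ t ∈ Icc (0:ℝ) x,
        |chat (d - lam * t) * (Kv (d + mu * t, d - lam * t) - Kv' (d + mu * t, d - lam * t))|
          ≤ b0 * W ((lam + mu) * t) := by
      intro t ht
      have htr := sol_Kv_eq hlam hmu hs _ (hmem t ht)
      have htr' := sol_Kv_eq hlam hmu hs' _ (hmem t ht)
      rw [show ((d + mu * t, d - lam * t) : ℝ × ℝ).1 - ((d + mu * t, d - lam * t) : ℝ × ℝ).2
        = (lam + mu) * t by show (d + mu * t) - (d - lam * t) = (lam + mu) * t; ring] at htr htr'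
      rw [htr, htr', ← mul_sub, abs_mul, abs_mul]
      have hWt : W ((lam + mu) * t) = |Ku ((lam + mu) * t, 0) - Ku' ((lam + mu) * t, 0)| := by
        rw [hW]; simp only; rw [cl01_of_mem (hStmem t ht)]
      rw [hWt]
      have h1 : |chat (d - lam * t)| ≤ cbar := hchatb _ (hargmem t ht)
      have h2 : |lam * r / mu| = lam * |r| / mu := by
        rw [abs_div, abs_mul, abs_of_pos hlam, abs_of_pos hmu]
      rw [h2, hb0]
      calc |chat (d - lam * t)|
            * (lam * |r| / mu * |Ku ((lam + mu) * t, 0) - Ku' ((lam + mu) * t, 0)|)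
          ≤ cbar * (lam * |r| / mu * |Ku ((lam + mu) * t, 0) - Ku' ((lam + mu) * t, 0)|) := by
            apply mul_le_mul_of_nonneg_right h1 (by positivity)
        _ = cbar * (lam * |r| / mu) * |Ku ((lam + mu) * t, 0) - Ku' ((lam + mu) * t, 0)| := by
            ring
    have hcontf : ContinuousOn (fun t => chat (d - lam * t)
        * (Kv (d + mu * t, d - lam * t) - Kv' (d + mu * t, d - lam * t))) (Icc 0 x) :=
      gam_continuousOn' (hs.2.1.continuousOn.sub hs'.2.1.continuousOn) hmem hargmem hchat
    have hintW : IntervalIntegrable (fun t => b0 * W ((lam + mu) * t)) volume 0 x :=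
      (continuous_const.mul (hWc.comp (continuous_const.mul continuous_id))).intervalIntegrable _ _
    have hWSx : W ((lam + mu) * x) = |Ku ((lam + mu) * x, 0) - Ku' ((lam + mu) * x, 0)| := by
      rw [hW]; simp only; rw [cl01_of_mem hy01]
    calc W ((lam + mu) * x)
        = |Ku ((lam + mu) * x, 0) - Ku' ((lam + mu) * x, 0)| := hWSx
      _ = |∫ t in (0:ℝ)..x, chat (d - lam * t)
          * (Kv (d + mu * t, d - lam * t) - Kv' (d + mu * t, d - lam * t))| := by rw [hkey]
      _ ≤ ∫ t in (0:ℝ)..x, |chat (d - lam * t)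
          * (Kv (d + mu * t, d - lam * t) - Kv' (d + mu * t, d - lam * t))| :=
          intervalIntegral.abs_integral_le_integral_abs hx.1
      _ ≤ ∫ t in (0:ℝ)..x, b0 * W ((lam + mu) * t) := by
          apply intervalIntegral.integral_mono_on hx.1 _ hintW hptw
          apply ContinuousOn.intervalIntegrable
          rw [uIcc_of_le hx.1]
          exact hcontf.abs
      _ = b0 * ∫ t in (0:ℝ)..x, W ((lam + mu) * t) :=
          intervalIntegral.integral_const_mul _ _
  have hvb := volterra_bound hWc hWnn (le_refl 0) hb0p hSg key
  have hzero : ∀ y ∈ Icc (0:ℝ) 1, Ku (y, 0) = Ku' (y, 0) := by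
    intro y hy
    have h := hvb y hy
    rw [gronwallBound_ε0_δ0, mul_zero, add_zero] at h
    rw [hW] at h
    simp only at h
    rw [cl01_of_mem hy] at h
    exact sub_eq_zero.1 (abs_nonpos_iff.1 h)
  have hKvEq : EqOn Kv Kv' Tri := by
    intro p hp
    obtain ⟨hp1, hp2, hp3⟩ := hp
    rw [sol_Kv_eq hlam hmu hs p ⟨hp1, hp2, hp3⟩, sol_Kv_eq hlam hmu hs' p ⟨hp1, hp2, hp3⟩,
      hzero (p.1 - p.2) ⟨by linarith, by linarith⟩]
  refine ⟨?_, hKvEq⟩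
  intro p hp
  have hid := Ku_characteristic hlam hmu hchat hs p hp
  have hid' := Ku_characteristic hlam hmu hchat hs' p hp
  rw [hid, hid']
  congr 1
  apply intervalIntegral.integral_congr
  intro t ht
  have hT0 : (0:ℝ) ≤ (p.1 - p.2) / (lam + mu) := by
    obtain ⟨hp1, hp2, hp3⟩ := hp
    exact div_nonneg (by linarith) (le_of_lt hSg)
  rw [uIcc_of_le hT0] at ht
  have hg := gam_mem hlam hmu hp ht
  show chat (ddf lam mu p - lam * t)
      * Kv (ddf lam mu p + mu * t, ddf lam mu p - lam * t)
    = chat (ddf lam mu p - lam * t)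
      * Kv' (ddf lam mu p + mu * t, ddf lam mu p - lam * t)
  rw [hKvEq hg.1]

end Final2

/-- Existence, uniqueness, and a uniform bound (depending only on `c̄, λ, μ, r`) for the
`C¹` solutions of the Goursat kernel system. -/
theorem stmt0 (lam mu cbar r : ℝ) (hlam : 0 < lam) (hmu : 0 < mu) (hcbar : 0 < cbar) :
    (∀ chat : ℝ → ℝ, ContDiffOn ℝ 1 chat (Icc 0 1) →
      (∀ x ∈ Icc (0:ℝ) 1, |chat x| ≤ cbar) →
      (∃ Ku Kv : ℝ × ℝ → ℝ, IsKernelSol lam mu r chat Ku Kv) ∧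
      (∀ Ku Kv Ku' Kv' : ℝ × ℝ → ℝ, IsKernelSol lam mu r chat Ku Kv →
        IsKernelSol lam mu r chat Ku' Kv' → (EqOn Ku Ku' Tri ∧ EqOn Kv Kv' Tri))) ∧
    (∃ Kbar : ℝ, 0 < Kbar ∧
      ∀ chat : ℝ → ℝ, ContDiffOn ℝ 1 chat (Icc 0 1) →
        (∀ x ∈ Icc (0:ℝ) 1, |chat x| ≤ cbar) →
        ∀ Ku Kv : ℝ × ℝ → ℝ, IsKernelSol lam mu r chat Ku Kv →
          ∀ p ∈ Tri, |Ku p| ≤ Kbar ∧ |Kv p| ≤ Kbar) := by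
  constructor
  · intro chat hchat hchatb
    exact ⟨exists_sol lam mu r hlam hmu hchat,
      fun Ku Kv Ku' Kv' h h' => sol_unique hlam hmu hcbar hchat hchatb h h'⟩
  · refine ⟨max 1 (max (KuBD lam mu cbar r) (KvBD lam mu cbar r)),
      lt_of_lt_of_le one_pos (le_max_left _ _), ?_⟩
    intro chat hchat hchatb Ku Kv hs p hp
    obtain ⟨h1, h2⟩ := sol_bound hlam hmu hcbar hchat hchatb hs p hp
    exact ⟨h1.trans ((le_max_left _ _).trans (le_max_right _ _)),
      h2.trans ((le_max_right _ _).trans (le_max_right _ _))⟩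
end

section
/- Fix λ, μ > 0, r ∈ ℝ and c̄ > 0. For a continuously differentiable ĉ : [0,1] → ℝ with sup-norm at most c̄, let 𝒦(ĉ) = (K^u, K^v) denote the unique C¹ solution on the triangle T = {(x,ξ) : 0 ≤ ξ ≤ x ≤ 1} of the kernel system μ ∂ₓK^u = λ ∂_ξK^u + ĉ(ξ) K^v, μ ∂ₓK^v = −μ ∂_ξK^v, K^u(x,x) = −ĉ(x)/(λ+μ), K^v(x,0) = (λ r/μ) K^u(x,0). Then the solution operator 𝒦 is continuous: for every such ĉ₁ and every ε > 0 there exists δ > 0 such that for every admissible ĉ₂ with sup_{x∈[0,1]} (|ĉ₁(x)−ĉ₂(x)| + |ĉ₁'(x)−ĉ₂'(x)|) ≤ δ, the corresponding kernels satisfy sup_{(x,ξ)∈T} |K^u₁(x,ξ)−K^u₂(x,ξ)| ≤ ε and sup_{(x,ξ)∈T} |K^v₁(x,ξ)−K^v₂(x,ξ)| ≤ ε. -/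
open Set MeasureTheory

/-- Gronwall: if continuous nonneg `f` satisfies `f x ≤ A + K ∫₀ˣ f` on `[0,T]`,
then `f x ≤ A * exp (K*T)` there. -/
lemma my_gronwall (f : ℝ → ℝ) (hf : Continuous f) (hnn : ∀ x, 0 ≤ f x)
    (A K T : ℝ) (hA : 0 ≤ A) (hK : 0 < K) (hT : 0 ≤ T)
    (h : ∀ x ∈ Icc (0:ℝ) T, f x ≤ A + K * ∫ u in (0:ℝ)..x, f u) :
    ∀ x ∈ Icc (0:ℝ) T, f x ≤ A * Real.exp (K * T) := by
  set h0 : ℝ → ℝ := fun x => ∫ u in (0:ℝ)..x, f u with hh0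
  have hderiv : ∀ x : ℝ, HasDerivAt h0 (f x) x := fun x =>
    intervalIntegral.integral_hasDerivAt_right (hf.intervalIntegrable _ _)
      (hf.stronglyMeasurableAtFilter _ _) hf.continuousAt
  have hnn0 : ∀ x ∈ Icc (0:ℝ) T, 0 ≤ h0 x := fun x hx =>
    intervalIntegral.integral_nonneg hx.1 fun u _ => hnn u
  have key : ∀ x ∈ Icc (0:ℝ) T, ‖h0 x‖ ≤ gronwallBound 0 K A (x - 0) := by
    apply norm_le_gronwallBound_of_norm_deriv_right_le
      (fun x _ => (hderiv x).continuousAt.continuousWithinAt)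
      (fun x _ => (hderiv x).hasDerivWithinAt)
    · simp [hh0]
    · intro x hx
      rw [Real.norm_eq_abs, Real.norm_eq_abs, abs_of_nonneg (hnn x),
        abs_of_nonneg (hnn0 x (Ico_subset_Icc_self hx))]
      linarith [h x (Ico_subset_Icc_self hx)]
  intro x hx
  have h1 := h x hx
  have h2 := key x hx
  rw [gronwallBound_of_K_ne_0 hK.ne'] at h2
  rw [Real.norm_eq_abs, abs_of_nonneg (hnn0 x hx)] at h2
  have hx1 : Real.exp (K * x) ≤ Real.exp (K * T) :=
    Real.exp_le_exp.2 (mul_le_mul_of_nonneg_left hx.2 hK.le)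
  have e1 : (1:ℝ) ≤ Real.exp (K * x) := by
    rw [Real.one_le_exp_iff]; exact mul_nonneg hK.le hx.1
  have : A + K * h0 x ≤ A * Real.exp (K * x) := by
    have := mul_le_mul_of_nonneg_left h2 hK.le
    have hKne : K ≠ 0 := hK.ne'
    field_simp at this ⊢
    simp only [sub_zero] at this
    nlinarith
  calc f x ≤ A + K * h0 x := h1
    _ ≤ A * Real.exp (K * x) := this
    _ ≤ A * Real.exp (K * T) := by nlinarith


/-- clip to [0,1] -/
noncomputable def cl (y : ℝ) : ℝ := max 0 (min y 1)

lemma cl_mem (y : ℝ) : cl y ∈ Icc (0:ℝ) 1 :=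
  ⟨le_max_left _ _, max_le (by norm_num) (min_le_right _ _)⟩

lemma cl_eq {y : ℝ} (hy : y ∈ Icc (0:ℝ) 1) : cl y = y := by
  rw [cl, min_eq_left hy.2, max_eq_right hy.1]

lemma cl_cont : Continuous cl := continuous_const.max (continuous_id.min continuous_const)

/-- Transport structure of `Kv`. -/
lemma kv_transport {lam mu r : ℝ} {chat : ℝ → ℝ} {Ku Kv : ℝ × ℝ → ℝ} (hmu : 0 < mu)
    (hsol : IsKernelSol lam mu r chat Ku Kv) :
    ∀ p ∈ Tri, Kv p = (lam * r / mu) * Ku (p.1 - p.2, 0) := by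
  obtain ⟨hKu, hKv, hpdeu, hpdev, hbd, hb0⟩ := hsol
  intro p hp
  obtain ⟨h0, h1, h2⟩ := hp
  set γ : ℝ → ℝ × ℝ := fun t => (p.1 - p.2 + t, t) with hγdef
  have hγ : ∀ t ∈ Icc (0:ℝ) p.2, γ t ∈ Tri := by
    intro t ht
    exact ⟨ht.1, by simp [hγdef]; linarith [ht.1, ht.2], by simp [hγdef]; linarith [ht.2]⟩
  have hderiv : ∀ t ∈ Icc (0:ℝ) p.2, HasDerivWithinAt (Kv ∘ γ) 0 (Icc 0 p.2) t := by
    intro t ht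
    have hmem := hγ t ht
    have hd : HasFDerivWithinAt Kv (fderivWithin ℝ Kv Tri (γ t)) Tri (γ t) :=
      ((hKv.differentiableOn one_ne_zero) _ hmem).hasFDerivWithinAt
    have hγd : HasDerivWithinAt γ ((1:ℝ), (1:ℝ)) (Icc 0 p.2) t := by
      have : HasDerivAt γ (1, 1) t := by
        have h1' : HasDerivAt (fun t : ℝ => p.1 - p.2 + t) 1 t := (hasDerivAt_id t).const_add _
        exact h1'.prodMk (hasDerivAt_id t)
      exact this.hasDerivWithinAt
    have hcomp := hd.comp_hasDerivWithinAt t hγd hγ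
    have hzero : fderivWithin ℝ Kv Tri (γ t) (1, 1) = 0 := by
      have hv := hpdev (γ t) hmem
      have hsplit : ((1:ℝ), (1:ℝ)) = ((1:ℝ), (0:ℝ)) + ((0:ℝ), (1:ℝ)) := by norm_num
      rw [hsplit, map_add]
      have hmul : mu * (fderivWithin ℝ Kv Tri (γ t) (1, 0)
          + fderivWithin ℝ Kv Tri (γ t) (0, 1)) = 0 := by ring_nf; linarith [hv]
      rcases mul_eq_zero.mp hmul with h | h
      · exact absurd h hmu.ne'
      · exact h
    rwa [hzero] at hcomp
  have hc := Convex.norm_image_sub_le_of_norm_hasDerivWithin_le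
    (C := 0) (f' := fun _ => (0:ℝ)) hderiv (fun x _ => by simp) (convex_Icc 0 p.2)
    (left_mem_Icc.2 h0) (right_mem_Icc.2 h0)
  simp only [Real.norm_eq_abs, zero_mul] at hc
  have heq : Kv (γ p.2) = Kv (γ 0) := by
    have hn := abs_nonneg ((Kv ∘ γ) p.2 - (Kv ∘ γ) 0)
    have h' : |(Kv ∘ γ) p.2 - (Kv ∘ γ) 0| = 0 := le_antisymm hc hn
    have := abs_eq_zero.mp h'
    have := sub_eq_zero.mp this
    simpa using this
  have hγ2 : γ p.2 = p := by simp [hγdef]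
  have hγ0 : γ 0 = (p.1 - p.2, 0) := by simp [hγdef]
  rw [hγ2, hγ0] at heq
  rw [heq]
  exact hb0 _ ⟨by linarith, by linarith⟩

/-- Characteristic integral identity for `Ku`. -/
lemma ku_int {lam mu r : ℝ} {chat : ℝ → ℝ} {Ku Kv : ℝ × ℝ → ℝ}
    (hlam : 0 < lam) (hmu : 0 < mu)
    (hchat : ContinuousOn chat (Icc 0 1))
    (hsol : IsKernelSol lam mu r chat Ku Kv) :
    ∀ p ∈ Tri, Ku p = - chat ((lam * p.1 + mu * p.2) / (lam + mu)) / (lam + mu)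
      + ∫ s in (0:ℝ)..((p.1 - p.2) / (lam + mu)),
          chat ((lam * p.1 + mu * p.2) / (lam + mu) - lam * s)
            * ((lam * r / mu) * Ku ((lam + mu) * s, 0)) := by
  have hL : 0 < lam + mu := by linarith
  have hKvT := kv_transport hmu hsol
  obtain ⟨hKu, hKv, hpdeu, hpdev, hbd, hb0⟩ := hsol
  intro p hp
  obtain ⟨h0, h1, h2⟩ := hp
  set x0 : ℝ := (lam * p.1 + mu * p.2) / (lam + mu) with hx0def
  set S : ℝ := (p.1 - p.2) / (lam + mu) with hSdef
  have hS : 0 ≤ S := div_nonneg (by linarith) hL.le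
  have hE1 : x0 + mu * S = p.1 := by rw [hx0def, hSdef]; field_simp; ring
  have hE2 : x0 - lam * S = p.2 := by rw [hx0def, hSdef]; field_simp; ring
  have hx0a : p.2 ≤ x0 := by nlinarith
  have hx0b : x0 ≤ p.1 := by nlinarith
  set γ : ℝ → ℝ × ℝ := fun s => (x0 + mu * s, x0 - lam * s) with hγdef
  have hγTri : ∀ s ∈ Icc (0:ℝ) S, γ s ∈ Tri := by
    intro s hs
    refine ⟨?_, ?_, ?_⟩ <;> simp only [hγdef] <;> nlinarith [hs.1, hs.2]
  have hγcont : Continuous γ := by fun_prop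
  have hγmaps : MapsTo γ (Icc 0 S) Tri := hγTri
  -- derivative along the characteristic
  have hderiv : ∀ s ∈ Icc (0:ℝ) S, HasDerivWithinAt (Ku ∘ γ)
      (chat (x0 - lam * s) * Kv (γ s)) (Icc 0 S) s := by
    intro s hs
    have hmem := hγTri s hs
    have hd : HasFDerivWithinAt Ku (fderivWithin ℝ Ku Tri (γ s)) Tri (γ s) :=
      ((hKu.differentiableOn one_ne_zero) _ hmem).hasFDerivWithinAt
    have hγd : HasDerivWithinAt γ (mu, -lam) (Icc 0 S) s := by
      have ha : HasDerivAt (fun s : ℝ => x0 + mu * s) mu s := by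
        simpa using ((hasDerivAt_id s).const_mul mu).const_add x0
      have hb : HasDerivAt (fun s : ℝ => x0 - lam * s) (-lam) s := by
        simpa using ((hasDerivAt_id s).const_mul lam).const_sub x0
      exact (ha.prodMk hb).hasDerivWithinAt
    have hcomp := hd.comp_hasDerivWithinAt s hγd hγmaps
    have hval : fderivWithin ℝ Ku Tri (γ s) (mu, -lam)
        = chat (x0 - lam * s) * Kv (γ s) := by
      have hu := hpdeu (γ s) hmem
      have hsplit : ((mu:ℝ), -lam) = mu • ((1:ℝ), (0:ℝ)) + (-lam) • ((0:ℝ), (1:ℝ)) := by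
        simp [Prod.ext_iff]
      rw [hsplit, map_add]
      simp only [_root_.map_smul, smul_eq_mul]
      have h2' : (γ s).2 = x0 - lam * s := rfl
      rw [← h2']
      linarith [hu]
    rwa [hval] at hcomp
  have hcont : ContinuousOn (Ku ∘ γ) (Icc 0 S) :=
    hKu.continuousOn.comp hγcont.continuousOn hγmaps
  have hmapschat : ∀ s ∈ Icc (0:ℝ) S, x0 - lam * s ∈ Icc (0:ℝ) 1 := by
    intro s hs; constructor <;> nlinarith [hs.1, hs.2]
  have hGcont : ContinuousOn (fun s => chat (x0 - lam * s) * Kv (γ s)) (Icc 0 S) := by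
    apply ContinuousOn.mul
    · exact hchat.comp (by fun_prop) hmapschat
    · exact hKv.continuousOn.comp hγcont.continuousOn hγmaps
  have hGint : IntervalIntegrable (fun s => chat (x0 - lam * s) * Kv (γ s)) volume 0 S := by
    rw [intervalIntegrable_iff_integrableOn_Icc_of_le hS]
    exact hGcont.integrableOn_compact isCompact_Icc
  have hftc : ∫ s in (0:ℝ)..S, chat (x0 - lam * s) * Kv (γ s)
      = (Ku ∘ γ) S - (Ku ∘ γ) 0 := by
    apply intervalIntegral.integral_eq_sub_of_hasDeriv_right_of_le hS hcont _ hGint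
    intro s hs
    exact (hderiv s (Ioo_subset_Icc_self hs)).mono_of_mem_nhdsWithin
      (Icc_mem_nhdsGT_of_mem ⟨hs.1.le, hs.2⟩)
  have hγS : γ S = p := by
    rw [hγdef]; ext <;> simp [hE1, hE2]
  have hγ0 : Ku (γ 0) = - chat x0 / (lam + mu) := by
    have : γ 0 = (x0, x0) := by simp [hγdef]
    rw [this]
    exact hbd x0 ⟨by linarith, by linarith⟩
  -- rewrite the integrand using the transport structure of Kv
  have hcongr : ∫ s in (0:ℝ)..S, chat (x0 - lam * s) * Kv (γ s)
      = ∫ s in (0:ℝ)..S, chat (x0 - lam * s) * ((lam * r / mu) * Ku ((lam + mu) * s, 0)) := by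
    apply intervalIntegral.integral_congr
    intro s hs
    rw [uIcc_of_le hS] at hs
    have := hKvT (γ s) (hγTri s hs)
    have harg : (γ s).1 - (γ s).2 = (lam + mu) * s := by simp [hγdef]; ring
    show chat (x0 - lam * s) * Kv (γ s)
      = chat (x0 - lam * s) * (lam * r / mu * Ku ((lam + mu) * s, 0))
    rw [this, harg]
  rw [hcongr] at hftc
  have : Ku p = Ku (γ 0) + ((Ku ∘ γ) S - (Ku ∘ γ) 0) := by
    simp [Function.comp, hγS]
  rw [this, hγ0, ← hftc]

noncomputable def Phi (lam mu : ℝ) (Ku : ℝ × ℝ → ℝ) : ℝ → ℝ :=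
  fun t => Ku (cl ((lam + mu) * t), 0)

noncomputable def Cc (chat : ℝ → ℝ) : ℝ → ℝ := fun y => chat (cl y)

lemma cl_tri (y : ℝ) : ((cl y, 0) : ℝ × ℝ) ∈ Tri :=
  ⟨le_rfl, (cl_mem y).1, (cl_mem y).2⟩

lemma phi_cont {lam mu : ℝ} {Ku : ℝ × ℝ → ℝ} (hKu : ContinuousOn Ku Tri) :
    Continuous (Phi lam mu Ku) := by
  apply hKu.comp_continuous ((cl_cont.comp (continuous_const.mul continuous_id)).prodMk continuous_const)
  exact fun t => cl_tri _

lemma cc_cont {chat : ℝ → ℝ} (hchat : ContinuousOn chat (Icc 0 1)) :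
    Continuous (Cc chat) := hchat.comp_continuous cl_cont cl_mem

lemma phi_rep {lam mu : ℝ} (hL : 0 < lam + mu) (Ku : ℝ × ℝ → ℝ) (t : ℝ) :
    Phi lam mu Ku t = Phi lam mu Ku (cl ((lam + mu) * t) / (lam + mu)) := by
  unfold Phi
  rw [mul_div_cancel₀ _ hL.ne', cl_eq (cl_mem _)]

lemma phi_rep_mem {lam mu : ℝ} (hL : 0 < lam + mu) (t : ℝ) :
    cl ((lam + mu) * t) / (lam + mu) ∈ Icc (0:ℝ) (1 / (lam + mu)) :=
  ⟨div_nonneg (cl_mem _).1 hL.le,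
    (div_le_div_iff_of_pos_right hL).mpr (cl_mem _).2⟩

/-- Master integral equation on the boundary, in clipped form. -/
lemma master_eq {lam mu r : ℝ} {chat : ℝ → ℝ} {Ku Kv : ℝ × ℝ → ℝ}
    (hlam : 0 < lam) (hmu : 0 < mu)
    (hchat : ContinuousOn chat (Icc 0 1))
    (hsol : IsKernelSol lam mu r chat Ku Kv) :
    ∀ t ∈ Icc (0:ℝ) (1 / (lam + mu)),
      Phi lam mu Ku t = - Cc chat (lam * t) / (lam + mu)
        + ∫ s in (0:ℝ)..t, Cc chat (lam * t - lam * s) * ((lam * r / mu) * Phi lam mu Ku s) := by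
  have hL : 0 < lam + mu := by linarith
  intro t ht
  have htT : (lam + mu) * t ≤ 1 := by
    rw [← mul_one_div_cancel hL.ne']
    exact mul_le_mul_of_nonneg_left ht.2 hL.le
  have htnn : 0 ≤ (lam + mu) * t := mul_nonneg hL.le ht.1
  have hpTri : (((lam + mu) * t, 0) : ℝ × ℝ) ∈ Tri := ⟨le_rfl, htnn, htT⟩
  have hke := ku_int hlam hmu hchat hsol _ hpTri
  simp only at hke
  have hx0 : (lam * ((lam + mu) * t) + mu * 0) / (lam + mu) = lam * t := by
    field_simp; ring
  have hSS : ((lam + mu) * t - 0) / (lam + mu) = t := by field_simp; ring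
  rw [hx0, hSS] at hke
  have hPhit : Phi lam mu Ku t = Ku ((lam + mu) * t, 0) := by
    unfold Phi; rw [cl_eq ⟨htnn, htT⟩]
  have hC : Cc chat (lam * t) = chat (lam * t) := by
    unfold Cc
    rw [cl_eq ⟨by nlinarith [ht.1], by nlinarith [ht.1, ht.2]⟩]
  rw [hPhit, hke, hC]
  congr 1
  apply intervalIntegral.integral_congr
  intro s hs
  rw [uIcc_of_le ht.1] at hs
  have h1 : Cc chat (lam * t - lam * s) = chat (lam * t - lam * s) := by
    unfold Cc
    rw [cl_eq ⟨by nlinarith [hs.1, hs.2], by nlinarith [hs.1, hs.2, ht.1, ht.2]⟩]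
  have h2 : Phi lam mu Ku s = Ku ((lam + mu) * s, 0) := by
    unfold Phi
    rw [cl_eq ⟨by nlinarith [hs.1], by nlinarith [hs.1, hs.2, ht.2]⟩]
  simp only [h1, h2]

/-- Globalize a Gronwall bound on `[0, 1/(lam+mu)]` using the clipping structure. -/
lemma global_bound {lam mu : ℝ} (hL : 0 < lam + mu) (g : ℝ → ℝ)
    (hg : Continuous g) (hnn : ∀ x, 0 ≤ g x)
    (hrep : ∀ t, g t = g (cl ((lam + mu) * t) / (lam + mu)))
    (A K : ℝ) (hA : 0 ≤ A) (hK : 0 < K)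
    (h : ∀ t ∈ Icc (0:ℝ) (1 / (lam + mu)), g t ≤ A + K * ∫ u in (0:ℝ)..t, g u) :
    ∀ t, g t ≤ A * Real.exp (K * (1 / (lam + mu))) := by
  have hmain := my_gronwall g hg hnn A K (1 / (lam + mu)) hA hK (by positivity) h
  intro t
  rw [hrep t]
  exact hmain _ (phi_rep_mem hL t)

/-- A priori bound on the boundary trace. -/
lemma phi_bound {lam mu r cbar : ℝ} {chat : ℝ → ℝ} {Ku Kv : ℝ × ℝ → ℝ}
    (hlam : 0 < lam) (hmu : 0 < mu) (hcbar : 0 < cbar)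
    (hchat : ContinuousOn chat (Icc 0 1))
    (hb : ∀ x ∈ Icc (0:ℝ) 1, |chat x| ≤ cbar)
    (hsol : IsKernelSol lam mu r chat Ku Kv) :
    ∀ t, |Phi lam mu Ku t| ≤ cbar / (lam + mu)
      * Real.exp ((|lam * r| * cbar / mu + 1) * (1 / (lam + mu))) := by
  have hL : 0 < lam + mu := by linarith
  set K : ℝ := |lam * r| * cbar / mu + 1 with hKdef
  have hK : 0 < K := by positivity
  have hphic : Continuous (Phi lam mu Ku) := phi_cont hsol.1.continuousOn
  have hCb : ∀ y, |Cc chat y| ≤ cbar := fun y => hb _ (cl_mem y)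
  apply global_bound hL _ hphic.abs (fun x => abs_nonneg _)
    (fun t => by rw [← phi_rep hL]) _ _ (by positivity) hK
  intro t ht
  have hme := master_eq hlam hmu hchat hsol t ht
  set f : ℝ → ℝ := fun s => Cc chat (lam * t - lam * s) * (lam * r / mu * Phi lam mu Ku s)
    with hfdef
  have hfc : Continuous f := by
    apply Continuous.mul
    · exact (cc_cont hchat).comp (by fun_prop)
    · exact continuous_const.mul hphic
  have hptwise : ∀ s ∈ Icc (0:ℝ) t, |f s| ≤ K * |Phi lam mu Ku s| := by
    intro s _
    rw [hfdef]
    simp only [abs_mul]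
    have h1 := hCb (lam * t - lam * s)
    have h2 : |lam * r / mu| = |lam * r| / mu := by
      rw [abs_div, abs_of_pos hmu]
    have h3 := abs_nonneg (Phi lam mu Ku s)
    have h4 := abs_nonneg (Cc chat (lam * t - lam * s))
    rw [h2]
    have h5 : |lam * r| / mu * |Phi lam mu Ku s| ≥ 0 := by positivity
    calc |Cc chat (lam * t - lam * s)| * (|lam * r| / mu * |Phi lam mu Ku s|)
        ≤ cbar * (|lam * r| / mu * |Phi lam mu Ku s|) := by nlinarith
      _ ≤ K * |Phi lam mu Ku s| := by
          rw [hKdef]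
          have : cbar * (|lam * r| / mu * |Phi lam mu Ku s|)
              = |lam * r| * cbar / mu * |Phi lam mu Ku s| := by ring
          rw [this]
          nlinarith
  have habs : |∫ s in (0:ℝ)..t, f s| ≤ ∫ s in (0:ℝ)..t, K * |Phi lam mu Ku s| := by
    refine (intervalIntegral.abs_integral_le_integral_abs ht.1).trans ?_
    apply intervalIntegral.integral_mono_on ht.1
      (hfc.abs.intervalIntegrable _ _) ((continuous_const.mul hphic.abs).intervalIntegrable _ _)
    exact hptwise
  rw [intervalIntegral.integral_const_mul] at habs
  have hstep : |Phi lam mu Ku t| ≤ |Cc chat (lam * t)| / (lam + mu) + |∫ s in (0:ℝ)..t, f s| := by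
    rw [hme]
    refine (abs_add_le _ _).trans ?_
    rw [abs_div, abs_neg, abs_of_pos hL]
  have hC1 : |Cc chat (lam * t)| / (lam + mu) ≤ cbar / (lam + mu) := by
    exact (div_le_div_iff_of_pos_right hL).mpr (hCb _)
  refine le_trans ?_ (add_le_add hC1 (le_trans habs le_rfl))
  exact hstep

noncomputable def Mb (lam mu r cbar : ℝ) : ℝ :=
  cbar / (lam + mu) * Real.exp ((|lam * r| * cbar / mu + 1) * (1 / (lam + mu)))

/-- Difference estimate for boundary traces. -/
lemma phi_diff {lam mu r cbar δ : ℝ} {chat1 chat2 : ℝ → ℝ} {Ku1 Kv1 Ku2 Kv2 : ℝ × ℝ → ℝ}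
    (hlam : 0 < lam) (hmu : 0 < mu) (hcbar : 0 < cbar) (hδ : 0 ≤ δ)
    (hchat1 : ContinuousOn chat1 (Icc 0 1)) (hchat2 : ContinuousOn chat2 (Icc 0 1))
    (hb1 : ∀ x ∈ Icc (0:ℝ) 1, |chat1 x| ≤ cbar) (hb2 : ∀ x ∈ Icc (0:ℝ) 1, |chat2 x| ≤ cbar)
    (hd : ∀ x ∈ Icc (0:ℝ) 1, |chat1 x - chat2 x| ≤ δ)
    (hsol1 : IsKernelSol lam mu r chat1 Ku1 Kv1) (hsol2 : IsKernelSol lam mu r chat2 Ku2 Kv2) :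
    ∀ t, |Phi lam mu Ku1 t - Phi lam mu Ku2 t|
      ≤ (δ / (lam + mu) + |lam * r| / mu * δ * Mb lam mu r cbar * (1 / (lam + mu)))
        * Real.exp ((|lam * r| * cbar / mu + 1) * (1 / (lam + mu))) := by
  have hL : 0 < lam + mu := by linarith
  have hMb : 0 < Mb lam mu r cbar := by unfold Mb; positivity
  set K : ℝ := |lam * r| * cbar / mu + 1 with hKdef
  have hK : 0 < K := by positivity
  set c0 : ℝ := |lam * r| / mu * δ * Mb lam mu r cbar with hc0def
  have hc0 : 0 ≤ c0 := by positivity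
  set T : ℝ := 1 / (lam + mu) with hTdef
  have hT : 0 < T := by positivity
  have hphic1 : Continuous (Phi lam mu Ku1) := phi_cont hsol1.1.continuousOn
  have hphic2 : Continuous (Phi lam mu Ku2) := phi_cont hsol2.1.continuousOn
  have hCb1 : ∀ y, |Cc chat1 y| ≤ cbar := fun y => hb1 _ (cl_mem y)
  have hCd : ∀ y, |Cc chat1 y - Cc chat2 y| ≤ δ := fun y => hd _ (cl_mem y)
  have hM2 : ∀ s, |Phi lam mu Ku2 s| ≤ Mb lam mu r cbar :=
    phi_bound hlam hmu hcbar hchat2 hb2 hsol2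
  apply global_bound hL (fun t => |Phi lam mu Ku1 t - Phi lam mu Ku2 t|)
    ((hphic1.sub hphic2).abs) (fun x => abs_nonneg _)
    (fun t => by
      have e1 := phi_rep hL Ku1 t
      have e2 := phi_rep hL Ku2 t
      simp only [e1, e2]) _ K (by positivity) hK
  intro t ht
  have h1 := master_eq hlam hmu hchat1 hsol1 t ht
  have h2 := master_eq hlam hmu hchat2 hsol2 t ht
  set f1 : ℝ → ℝ := fun s => Cc chat1 (lam * t - lam * s) * (lam * r / mu * Phi lam mu Ku1 s)
    with hf1def
  set f2 : ℝ → ℝ := fun s => Cc chat2 (lam * t - lam * s) * (lam * r / mu * Phi lam mu Ku2 s)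
    with hf2def
  have hf1c : Continuous f1 :=
    ((cc_cont hchat1).comp (by fun_prop)).mul (continuous_const.mul hphic1)
  have hf2c : Continuous f2 :=
    ((cc_cont hchat2).comp (by fun_prop)).mul (continuous_const.mul hphic2)
  have hdiffeq : Phi lam mu Ku1 t - Phi lam mu Ku2 t
      = - (Cc chat1 (lam * t) - Cc chat2 (lam * t)) / (lam + mu)
        + ∫ s in (0:ℝ)..t, (f1 s - f2 s) := by
    rw [intervalIntegral.integral_sub (hf1c.intervalIntegrable _ _) (hf2c.intervalIntegrable _ _),
      h1, h2]
    ring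
  have hptwise : ∀ s ∈ Icc (0:ℝ) t, |f1 s - f2 s|
      ≤ K * |Phi lam mu Ku1 s - Phi lam mu Ku2 s| + c0 := by
    intro s _
    have e : f1 s - f2 s = lam * r / mu
        * (Cc chat1 (lam * t - lam * s) * (Phi lam mu Ku1 s - Phi lam mu Ku2 s)
           + (Cc chat1 (lam * t - lam * s) - Cc chat2 (lam * t - lam * s)) * Phi lam mu Ku2 s) := by
      rw [hf1def, hf2def]; ring
    rw [e, abs_mul]
    have habsdiv : |lam * r / mu| = |lam * r| / mu := by rw [abs_div, abs_of_pos hmu]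
    rw [habsdiv]
    have step1 : |Cc chat1 (lam * t - lam * s) * (Phi lam mu Ku1 s - Phi lam mu Ku2 s)
        + (Cc chat1 (lam * t - lam * s) - Cc chat2 (lam * t - lam * s)) * Phi lam mu Ku2 s|
        ≤ cbar * |Phi lam mu Ku1 s - Phi lam mu Ku2 s| + δ * Mb lam mu r cbar := by
      refine (abs_add_le _ _).trans ?_
      rw [abs_mul, abs_mul]
      have g1 := hCb1 (lam * t - lam * s)
      have g2 := hCd (lam * t - lam * s)
      have g3 := hM2 s
      have g4 := abs_nonneg (Phi lam mu Ku1 s - Phi lam mu Ku2 s)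
      have g5 := abs_nonneg (Phi lam mu Ku2 s)
      exact add_le_add (mul_le_mul_of_nonneg_right g1 g4) (mul_le_mul g2 g3 g5 hδ)
    calc |lam * r| / mu * |Cc chat1 (lam * t - lam * s) * (Phi lam mu Ku1 s - Phi lam mu Ku2 s)
        + (Cc chat1 (lam * t - lam * s) - Cc chat2 (lam * t - lam * s)) * Phi lam mu Ku2 s|
        ≤ |lam * r| / mu * (cbar * |Phi lam mu Ku1 s - Phi lam mu Ku2 s| + δ * Mb lam mu r cbar) :=
          mul_le_mul_of_nonneg_left step1 (by positivity)
      _ ≤ K * |Phi lam mu Ku1 s - Phi lam mu Ku2 s| + c0 := by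
          rw [hKdef, hc0def]
          have hX := abs_nonneg (Phi lam mu Ku1 s - Phi lam mu Ku2 s)
          have hexp : |lam * r| / mu * (cbar * |Phi lam mu Ku1 s - Phi lam mu Ku2 s|
              + δ * Mb lam mu r cbar)
              = |lam * r| * cbar / mu * |Phi lam mu Ku1 s - Phi lam mu Ku2 s|
                + |lam * r| / mu * δ * Mb lam mu r cbar := by ring
          rw [hexp]
          linarith
  have hint : ∫ s in (0:ℝ)..t, (K * |Phi lam mu Ku1 s - Phi lam mu Ku2 s| + c0)
      = K * (∫ s in (0:ℝ)..t, |Phi lam mu Ku1 s - Phi lam mu Ku2 s|) + c0 * t := by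
    rw [intervalIntegral.integral_add (f := fun s => K * |Phi lam mu Ku1 s - Phi lam mu Ku2 s|)
        ((continuous_const.mul (hphic1.sub hphic2).abs).intervalIntegrable _ _)
        (intervalIntegrable_const), intervalIntegral.integral_const_mul,
      intervalIntegral.integral_const]
    simp [smul_eq_mul]; ring
  have hstep : |Phi lam mu Ku1 t - Phi lam mu Ku2 t|
      ≤ |Cc chat1 (lam * t) - Cc chat2 (lam * t)| / (lam + mu) + |∫ s in (0:ℝ)..t, (f1 s - f2 s)| := by
    rw [hdiffeq]
    refine (abs_add_le _ _).trans ?_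
    rw [abs_div, abs_neg, abs_of_pos hL]
  have habs : |∫ s in (0:ℝ)..t, (f1 s - f2 s)|
      ≤ ∫ s in (0:ℝ)..t, (K * |Phi lam mu Ku1 s - Phi lam mu Ku2 s| + c0) := by
    refine (intervalIntegral.abs_integral_le_integral_abs ht.1).trans ?_
    apply intervalIntegral.integral_mono_on ht.1
      ((hf1c.sub hf2c).abs.intervalIntegrable _ _)
      (((continuous_const.mul (hphic1.sub hphic2).abs).add continuous_const).intervalIntegrable _ _)
    exact hptwise
  rw [hint] at habs
  have hc0t : c0 * t ≤ c0 * T := mul_le_mul_of_nonneg_left ht.2 hc0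
  have hC1 : |Cc chat1 (lam * t) - Cc chat2 (lam * t)| / (lam + mu) ≤ δ / (lam + mu) :=
    (div_le_div_iff_of_pos_right hL).mpr (hCd _)
  refine le_trans hstep ?_
  refine le_trans (add_le_add hC1 (le_trans habs le_rfl)) ?_
  have : δ / (lam + mu) + (K * (∫ s in (0:ℝ)..t, |Phi lam mu Ku1 s - Phi lam mu Ku2 s|) + c0 * t)
      ≤ (δ / (lam + mu) + c0 * T)
        + K * (∫ s in (0:ℝ)..t, |Phi lam mu Ku1 s - Phi lam mu Ku2 s|) := by linarith
  refine le_trans this (add_le_add (le_of_eq ?_) le_rfl)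
  rw [hc0def, hTdef]

set_option maxHeartbeats 1000000 in
/-- Continuity of the solution operator `𝒦 : ĉ ↦ (K^u, K^v)` of the Goursat kernel
system, in the `C¹` norm on the data and the sup norm on the kernels. -/
theorem stmt1 (lam mu cbar r : ℝ) (hlam : 0 < lam) (hmu : 0 < mu) (hcbar : 0 < cbar)
    (chat1 : ℝ → ℝ) (hreg1 : ContDiffOn ℝ 1 chat1 (Icc 0 1))
    (hb1 : ∀ x ∈ Icc (0:ℝ) 1, |chat1 x| ≤ cbar) :
    ∀ ε > (0:ℝ), ∃ δ > (0:ℝ),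
      ∀ chat2 : ℝ → ℝ, ContDiffOn ℝ 1 chat2 (Icc 0 1) →
        (∀ x ∈ Icc (0:ℝ) 1, |chat2 x| ≤ cbar) →
        (∀ x ∈ Icc (0:ℝ) 1,
          |chat1 x - chat2 x|
            + |derivWithin chat1 (Icc 0 1) x - derivWithin chat2 (Icc 0 1) x| ≤ δ) →
        ∀ Ku1 Kv1 Ku2 Kv2 : ℝ × ℝ → ℝ,
          IsKernelSol lam mu r chat1 Ku1 Kv1 → IsKernelSol lam mu r chat2 Ku2 Kv2 →
          ∀ p ∈ Tri, |Ku1 p - Ku2 p| ≤ ε ∧ |Kv1 p - Kv2 p| ≤ ε := by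
  intro ε hε
  have hL : 0 < lam + mu := by linarith
  set T : ℝ := 1 / (lam + mu) with hTdef
  have hT : 0 < T := by positivity
  set K : ℝ := |lam * r| * cbar / mu + 1 with hKdef
  have hK : 0 < K := by positivity
  set M : ℝ := Mb lam mu r cbar with hMdef
  have hM : 0 < M := by rw [hMdef]; unfold Mb; positivity
  set E : ℝ := Real.exp (K * T) with hEdef
  have hE : 0 < E := Real.exp_pos _
  set D1 : ℝ := (1 / (lam + mu) + |lam * r| / mu * M * T) * E with hD1def
  have hD1 : 0 < D1 := by
    rw [hD1def]
    have : 0 < 1 / (lam + mu) + |lam * r| / mu * M * T := by positivity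
    positivity
  set D2 : ℝ := 1 / (lam + mu) + T * (|lam * r| / mu) * (cbar * D1 + M) with hD2def
  have hD2 : 0 < D2 := by rw [hD2def]; positivity
  set DKv : ℝ := |lam * r| / mu * D1 with hDKvdef
  have hDKv : 0 ≤ DKv := by rw [hDKvdef]; positivity
  set D : ℝ := max D2 DKv + 1 with hDdef
  have hD : 0 < D := by
    have := le_max_left D2 DKv
    rw [hDdef]; linarith
  refine ⟨ε / D, by positivity, ?_⟩
  set δ : ℝ := ε / D with hδdef
  have hδpos : 0 < δ := by positivity
  have hδD : δ * D = ε := by rw [hδdef]; field_simp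
  intro chat2 hreg2 hb2 hclose Ku1 Kv1 Ku2 Kv2 hsol1 hsol2 p hp
  have hchat1 : ContinuousOn chat1 (Icc 0 1) := hreg1.continuousOn
  have hchat2 : ContinuousOn chat2 (Icc 0 1) := hreg2.continuousOn
  have hd : ∀ x ∈ Icc (0:ℝ) 1, |chat1 x - chat2 x| ≤ δ := fun x hx =>
    le_trans (le_add_of_nonneg_right (abs_nonneg _)) (hclose x hx)
  -- boundary trace difference bound
  have hψ := phi_diff hlam hmu hcbar hδpos.le hchat1 hchat2 hb1 hb2 hd hsol1 hsol2
  have hψ' : ∀ t, |Phi lam mu Ku1 t - Phi lam mu Ku2 t| ≤ δ * D1 := by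
    intro t
    refine (hψ t).trans (le_of_eq ?_)
    rw [hD1def, hEdef, hMdef, hTdef, hKdef]
    ring
  have hM2 : ∀ s, |Phi lam mu Ku2 s| ≤ M :=
    fun s => by rw [hMdef]; exact phi_bound hlam hmu hcbar hchat2 hb2 hsol2 s
  have hCb1 : ∀ y, |Cc chat1 y| ≤ cbar := fun y => hb1 _ (cl_mem y)
  have hCd : ∀ y, |Cc chat1 y - Cc chat2 y| ≤ δ := fun y => hd _ (cl_mem y)
  obtain ⟨h0, h1, h2⟩ := hp
  have hy01 : p.1 - p.2 ∈ Icc (0:ℝ) 1 := ⟨by linarith, by linarith⟩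
  -- Kv estimate
  have hKvbound : |Kv1 p - Kv2 p| ≤ ε := by
    have e1 := kv_transport hmu hsol1 p ⟨h0, h1, h2⟩
    have e2 := kv_transport hmu hsol2 p ⟨h0, h1, h2⟩
    have hPhiS : ∀ Ku : ℝ × ℝ → ℝ,
        Ku (p.1 - p.2, 0) = Phi lam mu Ku ((p.1 - p.2) / (lam + mu)) := by
      intro Ku
      unfold Phi
      rw [mul_div_cancel₀ _ hL.ne', cl_eq hy01]
    rw [e1, e2, hPhiS Ku1, hPhiS Ku2]
    have : lam * r / mu * Phi lam mu Ku1 ((p.1 - p.2) / (lam + mu))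
        - lam * r / mu * Phi lam mu Ku2 ((p.1 - p.2) / (lam + mu))
        = lam * r / mu * (Phi lam mu Ku1 ((p.1 - p.2) / (lam + mu))
            - Phi lam mu Ku2 ((p.1 - p.2) / (lam + mu))) := by ring
    rw [this, abs_mul, abs_div, abs_of_pos hmu]
    calc |lam * r| / mu * |Phi lam mu Ku1 ((p.1 - p.2) / (lam + mu))
          - Phi lam mu Ku2 ((p.1 - p.2) / (lam + mu))|
        ≤ |lam * r| / mu * (δ * D1) :=
          mul_le_mul_of_nonneg_left (hψ' _) (by positivity)
      _ = δ * DKv := by rw [hDKvdef]; ring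
      _ ≤ δ * D := by
          have h3 := le_max_right D2 DKv
          have : DKv ≤ D := by rw [hDdef]; linarith
          exact mul_le_mul_of_nonneg_left this hδpos.le
      _ = ε := hδD
  -- Ku estimate
  have hKubound : |Ku1 p - Ku2 p| ≤ ε := by
    set x0 : ℝ := (lam * p.1 + mu * p.2) / (lam + mu) with hx0def
    set S : ℝ := (p.1 - p.2) / (lam + mu) with hSdef
    have hS0 : 0 ≤ S := by rw [hSdef]; exact div_nonneg (by linarith) hL.le
    have hST : S ≤ T := by
      rw [hSdef, hTdef]
      exact (div_le_div_iff_of_pos_right hL).mpr (by linarith)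
    have hx0a : p.2 ≤ x0 := by
      have e : x0 - p.2 = lam * (p.1 - p.2) / (lam + mu) := by
        rw [hx0def]; field_simp; ring
      have h' : 0 ≤ lam * (p.1 - p.2) / (lam + mu) :=
        div_nonneg (mul_nonneg hlam.le (by linarith)) hL.le
      linarith
    have hx0b : x0 ≤ p.1 := by
      have e : p.1 - x0 = mu * (p.1 - p.2) / (lam + mu) := by
        rw [hx0def]; field_simp; ring
      have h' : 0 ≤ mu * (p.1 - p.2) / (lam + mu) :=
        div_nonneg (mul_nonneg hmu.le (by linarith)) hL.le
      linarith
    have hke1 := ku_int hlam hmu hchat1 hsol1 p ⟨h0, h1, h2⟩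
    have hke2 := ku_int hlam hmu hchat2 hsol2 p ⟨h0, h1, h2⟩
    rw [← hx0def, ← hSdef] at hke1 hke2
    -- clipped integrands
    set g1 : ℝ → ℝ := fun s => Cc chat1 (x0 - lam * s) * (lam * r / mu * Phi lam mu Ku1 s)
      with hg1def
    set g2 : ℝ → ℝ := fun s => Cc chat2 (x0 - lam * s) * (lam * r / mu * Phi lam mu Ku2 s)
      with hg2def
    have hargmem : ∀ s ∈ Icc (0:ℝ) S, (x0 - lam * s ∈ Icc (0:ℝ) 1)
        ∧ ((lam + mu) * s ∈ Icc (0:ℝ) 1) := by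
      intro s hs
      have hsS : s ≤ S := hs.2
      have hs0 : 0 ≤ s := hs.1
      have hlamS : lam * S = x0 - p.2 := by
        rw [hSdef, hx0def]
        field_simp
        ring
      have hls : lam * s ≤ lam * S := mul_le_mul_of_nonneg_left hsS hlam.le
      have hls0 : 0 ≤ lam * s := mul_nonneg hlam.le hs0
      have hLS : (lam + mu) * S = p.1 - p.2 := by rw [hSdef]; field_simp
      have hLs : (lam + mu) * s ≤ (lam + mu) * S := mul_le_mul_of_nonneg_left hsS hL.le
      exact ⟨⟨by linarith, by linarith⟩, ⟨mul_nonneg hL.le hs0, by linarith⟩⟩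
    have hcongr1 : ∫ s in (0:ℝ)..S, chat1 (x0 - lam * s) * (lam * r / mu * Ku1 ((lam + mu) * s, 0))
        = ∫ s in (0:ℝ)..S, g1 s := by
      apply intervalIntegral.integral_congr
      intro s hs
      rw [uIcc_of_le hS0] at hs
      obtain ⟨hm1, hm2⟩ := hargmem s hs
      rw [hg1def]
      show chat1 (x0 - lam * s) * (lam * r / mu * Ku1 ((lam + mu) * s, 0))
        = Cc chat1 (x0 - lam * s) * (lam * r / mu * Phi lam mu Ku1 s)
      unfold Cc Phi
      rw [cl_eq hm1, cl_eq hm2]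
    have hcongr2 : ∫ s in (0:ℝ)..S, chat2 (x0 - lam * s) * (lam * r / mu * Ku2 ((lam + mu) * s, 0))
        = ∫ s in (0:ℝ)..S, g2 s := by
      apply intervalIntegral.integral_congr
      intro s hs
      rw [uIcc_of_le hS0] at hs
      obtain ⟨hm1, hm2⟩ := hargmem s hs
      rw [hg2def]
      show chat2 (x0 - lam * s) * (lam * r / mu * Ku2 ((lam + mu) * s, 0))
        = Cc chat2 (x0 - lam * s) * (lam * r / mu * Phi lam mu Ku2 s)
      unfold Cc Phi
      rw [cl_eq hm1, cl_eq hm2]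
    rw [hcongr1] at hke1
    rw [hcongr2] at hke2
    have hphic1 : Continuous (Phi lam mu Ku1) := phi_cont hsol1.1.continuousOn
    have hphic2 : Continuous (Phi lam mu Ku2) := phi_cont hsol2.1.continuousOn
    have hg1c : Continuous g1 :=
      ((cc_cont hchat1).comp (by fun_prop)).mul (continuous_const.mul hphic1)
    have hg2c : Continuous g2 :=
      ((cc_cont hchat2).comp (by fun_prop)).mul (continuous_const.mul hphic2)
    have hdiffeq : Ku1 p - Ku2 p
        = - (chat1 x0 - chat2 x0) / (lam + mu) + ∫ s in (0:ℝ)..S, (g1 s - g2 s) := by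
      rw [intervalIntegral.integral_sub (hg1c.intervalIntegrable _ _)
        (hg2c.intervalIntegrable _ _), hke1, hke2]
      ring
    set B : ℝ := |lam * r| / mu * (cbar * (δ * D1) + δ * M) with hBdef
    have hB : 0 ≤ B := by rw [hBdef]; positivity
    have hptwise : ∀ s ∈ Icc (0:ℝ) S, |g1 s - g2 s| ≤ B := by
      intro s _
      have e : g1 s - g2 s = lam * r / mu
          * (Cc chat1 (x0 - lam * s) * (Phi lam mu Ku1 s - Phi lam mu Ku2 s)
             + (Cc chat1 (x0 - lam * s) - Cc chat2 (x0 - lam * s)) * Phi lam mu Ku2 s) := by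
        rw [hg1def, hg2def]; ring
      rw [e, abs_mul, abs_div, abs_of_pos hmu, hBdef]
      apply mul_le_mul_of_nonneg_left ?_ (by positivity)
      refine (abs_add_le _ _).trans ?_
      rw [abs_mul, abs_mul]
      have g3 := hCb1 (x0 - lam * s)
      have g4 := hCd (x0 - lam * s)
      have g5 := hM2 s
      have g6 := hψ' s
      have g7 := abs_nonneg (Phi lam mu Ku1 s - Phi lam mu Ku2 s)
      have g8 := abs_nonneg (Phi lam mu Ku2 s)
      exact add_le_add (mul_le_mul g3 g6 g7 hcbar.le) (mul_le_mul g4 g5 g8 hδpos.le)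
    have hintb : |∫ s in (0:ℝ)..S, (g1 s - g2 s)| ≤ B * S := by
      have := intervalIntegral.norm_integral_le_of_norm_le_const
        (C := B) (f := fun s => g1 s - g2 s) (a := 0) (b := S) ?_
      · rw [Real.norm_eq_abs] at this
        calc |∫ s in (0:ℝ)..S, (g1 s - g2 s)| ≤ B * |S - 0| := this
          _ = B * S := by rw [sub_zero, abs_of_nonneg hS0]
      · intro s hs
        rw [Real.norm_eq_abs]
        apply hptwise
        rw [uIoc_of_le hS0] at hs
        exact ⟨hs.1.le, hs.2⟩
    have hfirst : |-(chat1 x0 - chat2 x0) / (lam + mu)| ≤ δ / (lam + mu) := by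
      rw [abs_div, abs_neg, abs_of_pos hL]
      exact (div_le_div_iff_of_pos_right hL).mpr (hd x0 ⟨by linarith, by linarith⟩)
    have hsum : |Ku1 p - Ku2 p| ≤ δ / (lam + mu) + B * S := by
      rw [hdiffeq]
      exact (abs_add_le _ _).trans (add_le_add hfirst hintb)
    have hBS : B * S ≤ B * T := mul_le_mul_of_nonneg_left hST hB
    have hfinal : δ / (lam + mu) + B * T ≤ δ * D := by
      have hD2le : D2 ≤ D := by
        have := le_max_left D2 DKv
        rw [hDdef]; linarith
      have heq : δ / (lam + mu) + B * T = δ * D2 := by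
        rw [hBdef, hD2def]
        ring
      rw [heq]
      exact mul_le_mul_of_nonneg_left hD2le hδpos.le
    calc |Ku1 p - Ku2 p| ≤ δ / (lam + mu) + B * S := hsum
      _ ≤ δ / (lam + mu) + B * T := by linarith
      _ ≤ δ * D := hfinal
      _ = ε := hδD
  exact ⟨hKubound, hKvbound⟩
end

section
/- Let c > 0 and let V : [0,∞) → [0,∞) be differentiable with V(0) ≥ 0. Let l₁, l₂ : [0,∞) → [0,∞) be nonnegative integrable functions with ∫₀^∞ l₁(s) ds = ‖l₁‖₁ < ∞ and ∫₀^∞ l₂(s) ds = ‖l₂‖₁ < ∞. If V′(t) ≤ −c V(t) + l₁(t) V(t) + l₂(t) for all t ≥ 0, then V(t) ≤ (e^{−c t} V(0) + ‖l₂‖₁) e^{‖l₁‖₁} for all t ≥ 0; in particular V is bounded on [0,∞) and V is integrable on [0,∞). -/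
open Set MeasureTheory

/-- Triangle Fubini: swapping a double integral over `{0 < u ≤ s ≤ t}`. -/
lemma tri_swap (t : ℝ) (f g : ℝ → ℝ) (hf : IntegrableOn f (Ioc 0 t))
    (hg : IntegrableOn g (Ioc 0 t)) :
    ∫ s in Ioc (0:ℝ) t, f s * ∫ u in Ioc (0:ℝ) s, g u
      = ∫ u in Ioc (0:ℝ) t, g u * ∫ s in Ioc u t, f s := by
  set F : ℝ × ℝ → ℝ := {p : ℝ × ℝ | p.2 ≤ p.1}.indicator (fun p => f p.1 * g p.2) with hFdef
  have hmeas : MeasurableSet {p : ℝ × ℝ | p.2 ≤ p.1} :=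
    measurableSet_le measurable_snd measurable_fst
  have hFint : Integrable F
      ((volume.restrict (Ioc (0:ℝ) t)).prod (volume.restrict (Ioc (0:ℝ) t))) :=
    (Integrable.mul_prod hf hg).indicator hmeas
  have hswap :
      ∫ s in Ioc (0:ℝ) t, (∫ u in Ioc (0:ℝ) t, F (s, u))
        = ∫ u in Ioc (0:ℝ) t, (∫ s in Ioc (0:ℝ) t, F (s, u)) :=
    integral_integral_swap (by exact hFint)
  have hL : ∀ s ∈ Ioc (0:ℝ) t,
      (∫ u in Ioc (0:ℝ) t, F (s, u)) = f s * ∫ u in Ioc (0:ℝ) s, g u := by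
    intro s hs
    have h1 : (fun u => F (s, u)) = (Iic s).indicator (fun u => f s * g u) := by
      funext u
      simp [hFdef, Set.indicator_apply, Set.mem_Iic]
    rw [h1, setIntegral_indicator measurableSet_Iic]
    have h2 : Ioc (0:ℝ) t ∩ Iic s = Ioc 0 s := by
      ext u; constructor
      · rintro ⟨⟨h1', _⟩, h3⟩; exact ⟨h1', h3⟩
      · rintro ⟨h1', h2'⟩; exact ⟨⟨h1', h2'.trans hs.2⟩, h2'⟩
    rw [h2, integral_const_mul]
  have hR : ∀ u ∈ Ioc (0:ℝ) t,
      (∫ s in Ioc (0:ℝ) t, F (s, u)) = g u * ∫ s in Ioc u t, f s := by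
    intro u hu
    have h1 : (fun s => F (s, u)) = (Ici u).indicator (fun s => f s * g u) := by
      funext s
      simp [hFdef, Set.indicator_apply, Set.mem_Ici]
    rw [h1, setIntegral_indicator measurableSet_Ici]
    have h2 : Ioc (0:ℝ) t ∩ Ici u = Icc u t := by
      ext s; constructor
      · rintro ⟨⟨_, h3⟩, h4⟩; exact ⟨h4, h3⟩
      · rintro ⟨h3, h4⟩; exact ⟨⟨hu.1.trans_le h3, h4⟩, h3⟩
    rw [h2, integral_Icc_eq_integral_Ioc, integral_mul_const, mul_comm]
  calc ∫ s in Ioc (0:ℝ) t, f s * ∫ u in Ioc (0:ℝ) s, g u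
      = ∫ s in Ioc (0:ℝ) t, (∫ u in Ioc (0:ℝ) t, F (s, u)) :=
        (setIntegral_congr_fun measurableSet_Ioc (fun s hs => (hL s hs).symm))
    _ = ∫ u in Ioc (0:ℝ) t, (∫ s in Ioc (0:ℝ) t, F (s, u)) := hswap
    _ = ∫ u in Ioc (0:ℝ) t, g u * ∫ s in Ioc u t, f s :=
        setIntegral_congr_fun measurableSet_Ioc (fun u hu => hR u hu)

/-- Gronwall inequality in integral form, with integrable coefficient. -/
lemma gron {b C : ℝ} (hb : 0 ≤ b) (ρ w : ℝ → ℝ)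
    (hρint : IntegrableOn ρ (Ioc 0 b))
    (hρ0 : ∀ s ∈ Ioc (0:ℝ) b, 0 ≤ ρ s)
    (hw : ContinuousOn w (Icc 0 b))
    (hC : 0 ≤ C)
    (h : ∀ τ ∈ Icc (0:ℝ) b, w τ ≤ C + ∫ s in Ioc (0:ℝ) τ, ρ s * w s) :
    w b ≤ C * Real.exp (∫ s in Ioc (0:ℝ) b, ρ s) := by
  set A : ℝ → ℝ := fun x => ∫ s in Ioc (0:ℝ) x, ρ s with hAdef
  have hρIcc : IntegrableOn ρ (Icc 0 b) := (integrableOn_Icc_iff_integrableOn_Ioc).2 hρint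
  have hAcont : ContinuousOn A (Icc 0 b) := intervalIntegral.continuousOn_primitive hρIcc
  have hsub : ∀ x, x ∈ Icc (0:ℝ) b → Ioc (0:ℝ) x ⊆ Ioc (0:ℝ) b := by
    intro x hx u hu; exact ⟨hu.1, hu.2.trans hx.2⟩
  have hprod : ∀ n : ℕ, IntegrableOn (fun s => ρ s * (A s) ^ n) (Ioc 0 b) := by
    intro n
    have : IntegrableOn (fun s => ρ s * (A s) ^ n) (Icc 0 b) :=
      hρIcc.mul_continuousOn (hAcont.pow n) isCompact_Icc
    exact this.mono_set Ioc_subset_Icc_self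
  -- the key moment identity
  have hJ : ∀ n : ℕ, ∀ x ∈ Icc (0:ℝ) b,
      ∫ s in Ioc (0:ℝ) x, ρ s * (A s) ^ n = (A x) ^ (n + 1) / ((n : ℝ) + 1) := by
    intro n
    induction n with
    | zero => intro x hx; simp [hAdef]
    | succ n ih =>
      intro x hx
      have hρx : IntegrableOn ρ (Ioc 0 x) := hρint.mono_set (hsub x hx)
      have hfx : IntegrableOn (fun s => ρ s * (A s) ^ n) (Ioc 0 x) :=
        (hprod n).mono_set (hsub x hx)
      have key : ∫ s in Ioc (0:ℝ) x, ρ s * (A s) ^ (n + 1)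
          = ∫ u in Ioc (0:ℝ) x, ρ u * ∫ s in Ioc u x, ρ s * (A s) ^ n := by
        rw [← tri_swap x (fun s => ρ s * (A s) ^ n) ρ hfx hρx]
        refine setIntegral_congr_fun measurableSet_Ioc (fun s hs => ?_)
        have hAs : (∫ u in Ioc (0:ℝ) s, ρ u) = A s := rfl
        rw [hAs]; ring
      have split : ∀ u ∈ Ioc (0:ℝ) x,
          ∫ s in Ioc u x, ρ s * (A s) ^ n
            = (A x) ^ (n + 1) / ((n : ℝ) + 1) - (A u) ^ (n + 1) / ((n : ℝ) + 1) := by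
        intro u hu
        have hu1 : (0:ℝ) ≤ u := hu.1.le
        have hdecomp : Ioc (0:ℝ) u ∪ Ioc u x = Ioc 0 x := Ioc_union_Ioc_eq_Ioc hu1 hu.2
        have hdisj : Disjoint (Ioc (0:ℝ) u) (Ioc u x) := Ioc_disjoint_Ioc_of_le le_rfl
        have h1 : IntegrableOn (fun s => ρ s * (A s) ^ n) (Ioc 0 u) :=
          hfx.mono_set (fun y hy => ⟨hy.1, hy.2.trans hu.2⟩)
        have h2 : IntegrableOn (fun s => ρ s * (A s) ^ n) (Ioc u x) :=
          hfx.mono_set (fun y hy => ⟨hu.1.trans hy.1, hy.2⟩)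
        have hun := setIntegral_union hdisj measurableSet_Ioc h1 h2
          (f := fun s => ρ s * (A s) ^ n) (μ := volume)
        rw [hdecomp] at hun
        have hux : u ∈ Icc (0:ℝ) b := ⟨hu1, hu.2.trans hx.2⟩
        rw [ih x hx, ih u hux] at hun
        linarith
      have hn1 : (0:ℝ) < (n:ℝ) + 1 := by positivity
      have hcong : ∫ u in Ioc (0:ℝ) x, ρ u * ∫ s in Ioc u x, ρ s * (A s) ^ n
          = ∫ u in Ioc (0:ℝ) x,
              (ρ u * (A x) ^ (n + 1) - ρ u * (A u) ^ (n + 1)) * ((n:ℝ) + 1)⁻¹ := by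
        refine setIntegral_congr_fun measurableSet_Ioc (fun u hu => ?_)
        rw [split u hu]; ring
      have key3 : ∫ u in Ioc (0:ℝ) x, ρ u * ∫ s in Ioc u x, ρ s * (A s) ^ n
          = ((A x) ^ (n + 1) * (A x)
            - (∫ s in Ioc (0:ℝ) x, ρ s * (A s) ^ (n + 1))) * ((n:ℝ) + 1)⁻¹ := by
        rw [hcong, integral_mul_const,
          integral_sub (hρx.mul_const _) ((hprod (n+1)).mono_set (hsub x hx)),
          integral_mul_const]
        have hAx : (∫ u in Ioc (0:ℝ) x, ρ u) = A x := rfl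
        rw [hAx]
        ring
      have h1 : (∫ s in Ioc (0:ℝ) x, ρ s * (A s) ^ (n + 1)) * ((n:ℝ) + 1)
          = (A x) ^ (n + 1) * (A x) - ∫ s in Ioc (0:ℝ) x, ρ s * (A s) ^ (n + 1) := by
        have h2 := congrArg (fun y : ℝ => y * ((n:ℝ) + 1)) (key.trans key3)
        rw [mul_assoc, inv_mul_cancel₀ (ne_of_gt hn1), mul_one] at h2
        exact h2
      have hgc : ((n + 1 : ℕ) : ℝ) + 1 = (n:ℝ) + 1 + 1 := by push_cast; ring
      rw [hgc, eq_div_iff (by positivity), pow_succ]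
      linear_combination h1
  -- bound on w over [0, b]
  obtain ⟨z, hz, hM⟩ := isCompact_Icc.exists_isMaxOn (nonempty_Icc.2 hb) hw
  set M := w z with hMdef
  -- Picard iteration bound
  have hQ : ∀ n : ℕ, ∀ τ ∈ Icc (0:ℝ) b,
      w τ ≤ C * (∑ k ∈ Finset.range n, (A τ) ^ k / (Nat.factorial k))
        + M * (A τ) ^ n / (Nat.factorial n) := by
    intro n
    induction n with
    | zero => intro τ hτ; simpa using hM hτ
    | succ n ih =>
      intro τ hτ
      have hτb : Ioc (0:ℝ) τ ⊆ Ioc (0:ℝ) b := hsub τ hτ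
      have hτIcc : Ioc (0:ℝ) τ ⊆ Icc (0:ℝ) b := fun y hy => ⟨hy.1.le, hy.2.trans hτ.2⟩
      have hwInt : IntegrableOn (fun s => ρ s * w s) (Ioc 0 τ) :=
        (hρIcc.mul_continuousOn hw isCompact_Icc).mono_set hτIcc
      have hGcont : ContinuousOn (fun s => C * (∑ k ∈ Finset.range n, (A s) ^ k /
          (Nat.factorial k)) + M * (A s) ^ n / (Nat.factorial n)) (Icc 0 b) := by
        apply ContinuousOn.add
        · exact continuousOn_const.mul
            (continuousOn_finset_sum _ (fun k _ => (hAcont.pow k).div_const _))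
        · exact (continuousOn_const.mul (hAcont.pow n)).div_const _
      have hGint : IntegrableOn (fun s => ρ s * (C * (∑ k ∈ Finset.range n, (A s) ^ k /
          (Nat.factorial k)) + M * (A s) ^ n / (Nat.factorial n))) (Ioc 0 τ) :=
        (hρIcc.mul_continuousOn hGcont isCompact_Icc).mono_set hτIcc
      have hmono : ∫ s in Ioc (0:ℝ) τ, ρ s * w s
          ≤ ∫ s in Ioc (0:ℝ) τ, ρ s * (C * (∑ k ∈ Finset.range n, (A s) ^ k /
            (Nat.factorial k)) + M * (A s) ^ n / (Nat.factorial n)) := by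
        refine setIntegral_mono_on hwInt hGint measurableSet_Ioc (fun s hs => ?_)
        exact mul_le_mul_of_nonneg_left (ih s (hτIcc hs)) (hρ0 s (hτb hs))
      have expand : (fun s => ρ s * (C * (∑ k ∈ Finset.range n, (A s) ^ k /
            (Nat.factorial k)) + M * (A s) ^ n / (Nat.factorial n)))
          = fun s => (∑ k ∈ Finset.range n, (C / (Nat.factorial k)) * (ρ s * (A s) ^ k))
            + (M / (Nat.factorial n)) * (ρ s * (A s) ^ n) := by
        funext s
        rw [mul_add, Finset.mul_sum, Finset.mul_sum]
        congr 1
        · exact Finset.sum_congr rfl (fun k _ => by ring)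
        · ring
      have hcalc : ∫ s in Ioc (0:ℝ) τ, ρ s * (C * (∑ k ∈ Finset.range n, (A s) ^ k /
            (Nat.factorial k)) + M * (A s) ^ n / (Nat.factorial n))
          = (∑ k ∈ Finset.range n, (C / (Nat.factorial k)) * ((A τ) ^ (k+1) / ((k:ℝ) + 1)))
            + (M / (Nat.factorial n)) * ((A τ) ^ (n+1) / ((n:ℝ) + 1)) := by
        rw [expand]
        have hint_each : ∀ k ∈ Finset.range n,
            Integrable (fun s => (C / (Nat.factorial k)) * (ρ s * (A s) ^ k))
              (volume.restrict (Ioc (0:ℝ) τ)) :=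
          fun k _ => ((hprod k).mono_set hτb).const_mul _
        rw [integral_add (integrable_finset_sum _ hint_each)
          (((hprod n).mono_set hτb).const_mul _), integral_finset_sum _ hint_each,
          integral_const_mul]
        rw [hJ n τ hτ]
        congr 1
        exact Finset.sum_congr rfl (fun k _ => by rw [integral_const_mul, hJ k τ hτ])
      have hterm : ∀ k : ℕ, (C / (Nat.factorial k)) * ((A τ) ^ (k+1) / ((k:ℝ) + 1))
          = C * ((A τ) ^ (k+1) / (Nat.factorial (k+1))) := by
        intro k
        have hfs : ((Nat.factorial (k+1)):ℝ) = ((k:ℝ) + 1) * (Nat.factorial k) := by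
          rw [Nat.factorial_succ]; push_cast; ring
        rw [hfs, div_mul_div_comm, mul_comm ((Nat.factorial k : ℕ) : ℝ) ((k:ℝ)+1),
          mul_div_assoc]
      have hMterm : (M / (Nat.factorial n)) * ((A τ) ^ (n+1) / ((n:ℝ) + 1))
          = M * (A τ) ^ (n+1) / (Nat.factorial (n+1)) := by
        have hfs : ((Nat.factorial (n+1)):ℝ) = ((n:ℝ) + 1) * (Nat.factorial n) := by
          rw [Nat.factorial_succ]; push_cast; ring
        rw [hfs, div_mul_div_comm, mul_comm ((Nat.factorial n : ℕ) : ℝ) ((n:ℝ)+1)]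
      have hsumrw : ∑ k ∈ Finset.range n, (C / (Nat.factorial k)) *
            ((A τ) ^ (k+1) / ((k:ℝ) + 1))
          = ∑ k ∈ Finset.range n, C * ((A τ) ^ (k+1) / (Nat.factorial (k+1))) :=
        Finset.sum_congr rfl (fun k _ => hterm k)
      have hshift : C * (∑ k ∈ Finset.range (n+1), (A τ) ^ k / (Nat.factorial k))
          = (∑ k ∈ Finset.range n, C * ((A τ) ^ (k+1) / (Nat.factorial (k+1)))) + C := by
        rw [Finset.sum_range_succ', mul_add, Finset.mul_sum]
        simp
      calc w τ ≤ C + ∫ s in Ioc (0:ℝ) τ, ρ s * w s := h τ hτ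
        _ ≤ C + ((∑ k ∈ Finset.range n, (C / (Nat.factorial k)) *
              ((A τ) ^ (k+1) / ((k:ℝ) + 1)))
            + (M / (Nat.factorial n)) * ((A τ) ^ (n+1) / ((n:ℝ) + 1))) := by
          rw [← hcalc]; linarith [hmono]
        _ = C * (∑ k ∈ Finset.range (n+1), (A τ) ^ k / (Nat.factorial k))
            + M * (A τ) ^ (n+1) / (Nat.factorial (n+1)) := by
          rw [hsumrw, hMterm, hshift]; ring
  -- pass to the limit
  have hbmem : b ∈ Icc (0:ℝ) b := ⟨hb, le_rfl⟩
  have hlim1 : Filter.Tendsto (fun n => ∑ k ∈ Finset.range n, (A b) ^ k / (Nat.factorial k))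
      Filter.atTop (nhds (Real.exp (A b))) := by
    rw [Real.exp_eq_exp_ℝ]
    exact (NormedSpace.expSeries_div_hasSum_exp (A b)).tendsto_sum_nat
  have hlim2 : Filter.Tendsto (fun n => M * (A b) ^ n / (Nat.factorial n))
      Filter.atTop (nhds 0) := by
    have h2 := (FloorSemiring.tendsto_pow_div_factorial_atTop (A b)).const_mul M
    rw [mul_zero] at h2
    simpa [mul_div_assoc] using h2
  have hlim : Filter.Tendsto (fun n => C * (∑ k ∈ Finset.range n, (A b) ^ k /
      (Nat.factorial k)) + M * (A b) ^ n / (Nat.factorial n)) Filter.atTop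
      (nhds (C * Real.exp (A b) + 0)) := (hlim1.const_mul C).add hlim2
  have hfin := ge_of_tendsto hlim (Filter.Eventually.of_forall (fun n => hQ n b hbmem))
  simpa using hfin

/-- Gronwall-type comparison lemma (Lemma B.6 of Krstic–Kokotovic type): if
`V′(t) ≤ −c V(t) + l₁(t) V(t) + l₂(t)` with `l₁, l₂ ≥ 0` integrable on `[0,∞)`, then
`V(t) ≤ (e^{−ct} V(0) + ‖l₂‖₁) e^{‖l₁‖₁}`; in particular `V` is bounded and integrable
on `[0,∞)`. -/
theorem stmt5 (c : ℝ) (hc : 0 < c) (V V' l1 l2 : ℝ → ℝ)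
    (hVnonneg : ∀ t ≥ (0:ℝ), 0 ≤ V t)
    (hV : ∀ t ≥ (0:ℝ), HasDerivWithinAt V (V' t) (Ici 0) t)
    (hl1nonneg : ∀ t ≥ (0:ℝ), 0 ≤ l1 t) (hl2nonneg : ∀ t ≥ (0:ℝ), 0 ≤ l2 t)
    (hl1int : IntegrableOn l1 (Ioi 0)) (hl2int : IntegrableOn l2 (Ioi 0))
    (hineq : ∀ t ≥ (0:ℝ), V' t ≤ -c * V t + l1 t * V t + l2 t) :
    (∀ t ≥ (0:ℝ), V t ≤ (Real.exp (-c * t) * V 0 + ∫ s in Ioi (0:ℝ), l2 s)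
        * Real.exp (∫ s in Ioi (0:ℝ), l1 s)) ∧
    (∃ M : ℝ, ∀ t ≥ (0:ℝ), V t ≤ M) ∧
    IntegrableOn V (Ioi 0) := by
  have hVcont : ContinuousOn V (Ici 0) := fun t ht => (hV t ht).continuousWithinAt
  set L1 : ℝ := ∫ s in Ioi (0:ℝ), l1 s with hL1def
  set L2 : ℝ := ∫ s in Ioi (0:ℝ), l2 s with hL2def
  have hL1 : 0 ≤ L1 := setIntegral_nonneg measurableSet_Ioi (fun x hx => hl1nonneg x hx.le)
  have hL2 : 0 ≤ L2 := setIntegral_nonneg measurableSet_Ioi (fun x hx => hl2nonneg x hx.le)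
  have hecont : Continuous (fun s : ℝ => Real.exp (c * s)) :=
    Real.continuous_exp.comp (continuous_const.mul continuous_id)
  set W : ℝ → ℝ := fun s => V s * Real.exp (c * s) with hWdef
  have hWcont : ContinuousOn W (Ici 0) := hVcont.mul hecont.continuousOn
  -- comparison inequality for W
  have hcomp : ∀ τ ≥ (0:ℝ), W τ ≤ V 0
      + ∫ s in Ioc (0:ℝ) τ, (l1 s * W s + l2 s * Real.exp (c * s)) := by
    intro τ hτ
    have hder : ∀ x ∈ Ioo (0:ℝ) τ, HasDerivWithinAt W
        (V' x * Real.exp (c * x) + V x * (Real.exp (c * x) * c)) (Ioi x) x := by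
      intro x hx
      have h1 : HasDerivWithinAt V (V' x) (Ioi x) x :=
        (hV x hx.1.le).mono (fun y hy => le_of_lt (lt_of_le_of_lt hx.1.le hy))
      have h2 : HasDerivAt (fun s : ℝ => Real.exp (c * s)) (Real.exp (c * x) * c) x := by
        have hid : HasDerivAt (fun s : ℝ => c * s) c x := by
          simpa using (hasDerivAt_id x).const_mul c
        exact hid.exp
      exact h1.mul h2.hasDerivWithinAt
    have hWIcc : ContinuousOn W (Icc 0 τ) := hWcont.mono (fun y hy => hy.1)
    have hl1Icc : IntegrableOn l1 (Icc 0 τ) :=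
      (integrableOn_Icc_iff_integrableOn_Ioc).2 (hl1int.mono_set (fun y hy => hy.1))
    have hl2Icc : IntegrableOn l2 (Icc 0 τ) :=
      (integrableOn_Icc_iff_integrableOn_Ioc).2 (hl2int.mono_set (fun y hy => hy.1))
    have hφint : IntegrableOn (fun s => l1 s * W s + l2 s * Real.exp (c * s)) (Icc 0 τ) :=
      (hl1Icc.mul_continuousOn hWIcc isCompact_Icc).add
        (hl2Icc.mul_continuousOn hecont.continuousOn isCompact_Icc)
    have hφg : ∀ x ∈ Ioo (0:ℝ) τ, V' x * Real.exp (c * x) + V x * (Real.exp (c * x) * c)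
        ≤ l1 x * W x + l2 x * Real.exp (c * x) := by
      intro x hx
      have hE : (0:ℝ) < Real.exp (c * x) := Real.exp_pos _
      have hmul := mul_le_mul_of_nonneg_right (hineq x hx.1.le) hE.le
      simp only [hWdef]
      nlinarith [hmul]
    have hmain := intervalIntegral.sub_le_integral_of_hasDeriv_right_of_le hτ hWIcc hder hφint hφg
    rw [intervalIntegral.integral_of_le hτ] at hmain
    have hW0 : W 0 = V 0 := by simp [hWdef]
    linarith [hmain, hW0.le, hW0.ge]
  -- Part 1 : pointwise bound
  have part1 : ∀ t ≥ (0:ℝ), V t ≤ (Real.exp (-c * t) * V 0 + L2) * Real.exp L1 := by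
    intro t ht
    have hl2e_Icc : IntegrableOn (fun s => l2 s * Real.exp (c * s)) (Icc 0 t) :=
      ((integrableOn_Icc_iff_integrableOn_Ioc).2 (hl2int.mono_set (fun y hy => hy.1))).mul_continuousOn
        hecont.continuousOn isCompact_Icc
    have hl2e_Ioc : IntegrableOn (fun s => l2 s * Real.exp (c * s)) (Ioc 0 t) :=
      hl2e_Icc.mono_set Ioc_subset_Icc_self
    set Ct : ℝ := V 0 + ∫ s in Ioc (0:ℝ) t, l2 s * Real.exp (c * s) with hCtdef
    have hCt0 : 0 ≤ Ct := add_nonneg (hVnonneg 0 le_rfl)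
      (setIntegral_nonneg measurableSet_Ioc
        (fun s hs => mul_nonneg (hl2nonneg s hs.1.le) (Real.exp_pos _).le))
    have hgronhyp : ∀ τ ∈ Icc (0:ℝ) t, W τ ≤ Ct + ∫ s in Ioc (0:ℝ) τ, l1 s * W s := by
      intro τ hτ
      have h1 := hcomp τ hτ.1
      have hl1W : IntegrableOn (fun s => l1 s * W s) (Ioc 0 τ) :=
        (((integrableOn_Icc_iff_integrableOn_Ioc).2 (hl1int.mono_set (fun y hy => hy.1))).mul_continuousOn
          (hWcont.mono (fun y hy => hy.1)) isCompact_Icc).mono_set Ioc_subset_Icc_self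
      have hl2eτ : IntegrableOn (fun s => l2 s * Real.exp (c * s)) (Ioc 0 τ) :=
        hl2e_Ioc.mono_set (Ioc_subset_Ioc_right hτ.2)
      rw [integral_add hl1W hl2eτ] at h1
      have h2 : ∫ s in Ioc (0:ℝ) τ, l2 s * Real.exp (c * s)
          ≤ ∫ s in Ioc (0:ℝ) t, l2 s * Real.exp (c * s) := by
        refine setIntegral_mono_set hl2e_Ioc ?_ (HasSubset.Subset.eventuallyLE
          (Ioc_subset_Ioc_right hτ.2))
        refine ae_restrict_of_forall_mem measurableSet_Ioc (fun s hs => ?_)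
        exact mul_nonneg (hl2nonneg s hs.1.le) (Real.exp_pos _).le
      rw [hCtdef]
      linarith
    have hgron := gron ht l1 W (hl1int.mono_set (fun y hy => hy.1))
      (fun s hs => hl1nonneg s hs.1.le) (hWcont.mono (fun y hy => hy.1)) hCt0 hgronhyp
    -- convert back to V
    have hexpne : Real.exp (c * t) * Real.exp (-c * t) = 1 := by
      rw [← Real.exp_add]; simp
    have hVW : V t = W t * Real.exp (-c * t) := by
      simp only [hWdef]
      rw [mul_assoc, hexpne, mul_one]
    have hE0 : (0:ℝ) ≤ Real.exp (-c * t) := (Real.exp_pos _).le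
    have hstep1 : V t ≤ Ct * Real.exp (∫ s in Ioc (0:ℝ) t, l1 s) * Real.exp (-c * t) := by
      rw [hVW]
      exact mul_le_mul_of_nonneg_right hgron hE0
    have hA1 : ∫ s in Ioc (0:ℝ) t, l1 s ≤ L1 := by
      refine setIntegral_mono_set hl1int ?_ (HasSubset.Subset.eventuallyLE
        (fun y hy => hy.1))
      exact ae_restrict_of_forall_mem measurableSet_Ioi (fun s hs => hl1nonneg s hs.le)
    have hexp1 : Real.exp (∫ s in Ioc (0:ℝ) t, l1 s) ≤ Real.exp L1 := Real.exp_le_exp.2 hA1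
    have hl2bd : Real.exp (-c * t) * (∫ s in Ioc (0:ℝ) t, l2 s * Real.exp (c * s)) ≤ L2 := by
      have e1 : Real.exp (-c * t) * (∫ s in Ioc (0:ℝ) t, l2 s * Real.exp (c * s))
          = ∫ s in Ioc (0:ℝ) t, l2 s * Real.exp (c * s) * Real.exp (-c * t) := by
        rw [integral_mul_const, mul_comm]
      have e2 : ∫ s in Ioc (0:ℝ) t, l2 s * Real.exp (c * s) * Real.exp (-c * t)
          ≤ ∫ s in Ioc (0:ℝ) t, l2 s := by
        refine setIntegral_mono_on (hl2e_Ioc.mul_const _)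
          (hl2int.mono_set (fun y hy => hy.1)) measurableSet_Ioc (fun s hs => ?_)
        have hX : Real.exp (c * s) * Real.exp (-c * t) ≤ 1 := by
          rw [← Real.exp_add]
          have : c * s + -c * t ≤ 0 := by nlinarith [hs.2, hs.1.le]
          exact Real.exp_le_one_iff.2 this
        rw [mul_assoc]
        exact mul_le_of_le_one_right (hl2nonneg s hs.1.le) hX
      have e3 : ∫ s in Ioc (0:ℝ) t, l2 s ≤ L2 := by
        refine setIntegral_mono_set hl2int ?_ (HasSubset.Subset.eventuallyLE
          (fun y hy => hy.1))
        exact ae_restrict_of_forall_mem measurableSet_Ioi (fun s hs => hl2nonneg s hs.le)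
      linarith [e1.le, e1.ge]
    have hfact : Ct * Real.exp (∫ s in Ioc (0:ℝ) t, l1 s) * Real.exp (-c * t)
        = (Real.exp (-c * t) * V 0
            + Real.exp (-c * t) * (∫ s in Ioc (0:ℝ) t, l2 s * Real.exp (c * s)))
          * Real.exp (∫ s in Ioc (0:ℝ) t, l1 s) := by
      rw [hCtdef]; ring
    have hfinal : (Real.exp (-c * t) * V 0
            + Real.exp (-c * t) * (∫ s in Ioc (0:ℝ) t, l2 s * Real.exp (c * s)))
          * Real.exp (∫ s in Ioc (0:ℝ) t, l1 s)
        ≤ (Real.exp (-c * t) * V 0 + L2) * Real.exp L1 := by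
      refine mul_le_mul (by linarith) hexp1 (Real.exp_pos _).le ?_
      have : 0 ≤ Real.exp (-c * t) * V 0 := mul_nonneg hE0 (hVnonneg 0 le_rfl)
      linarith
    calc V t ≤ Ct * Real.exp (∫ s in Ioc (0:ℝ) t, l1 s) * Real.exp (-c * t) := hstep1
      _ = _ := hfact
      _ ≤ (Real.exp (-c * t) * V 0 + L2) * Real.exp L1 := hfinal
  -- Part 2 : boundedness
  have part2 : ∀ t ≥ (0:ℝ), V t ≤ (V 0 + L2) * Real.exp L1 := by
    intro t ht
    have h1 := part1 t ht
    have h2 : Real.exp (-c * t) ≤ 1 := Real.exp_le_one_iff.2 (by nlinarith)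
    have h3 : 0 ≤ V 0 := hVnonneg 0 le_rfl
    nlinarith [Real.exp_pos L1, mul_nonneg (mul_nonneg (sub_nonneg.2 h2) h3)
      (Real.exp_pos L1).le]
  refine ⟨part1, ⟨(V 0 + L2) * Real.exp L1, part2⟩, ?_⟩
  -- Part 3 : integrability
  set MM : ℝ := (V 0 + L2) * Real.exp L1 with hMMdef
  have hMM0 : 0 ≤ MM :=
    mul_nonneg (add_nonneg (hVnonneg 0 le_rfl) hL2) (Real.exp_pos _).le
  set B0 : ℝ := (V 0 + MM * L1 + L2) / c with hB0def
  have key : ∀ T ≥ (0:ℝ), ∫ s in Ioc (0:ℝ) T, V s ≤ B0 := by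
    intro T hT
    have hVIcc : ContinuousOn V (Icc 0 T) := hVcont.mono (fun y hy => hy.1)
    have hVint : IntegrableOn V (Icc 0 T) := hVIcc.integrableOn_Icc
    have hl1Icc : IntegrableOn l1 (Icc 0 T) :=
      (integrableOn_Icc_iff_integrableOn_Ioc).2 (hl1int.mono_set (fun y hy => hy.1))
    have hl2Icc : IntegrableOn l2 (Icc 0 T) :=
      (integrableOn_Icc_iff_integrableOn_Ioc).2 (hl2int.mono_set (fun y hy => hy.1))
    have hcV : IntegrableOn (fun s => -c * V s) (Icc 0 T) := hVint.const_mul _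
    have hl1V : IntegrableOn (fun s => l1 s * V s) (Icc 0 T) :=
      hl1Icc.mul_continuousOn hVIcc isCompact_Icc
    have hφ12 : IntegrableOn (fun s => -c * V s + l1 s * V s) (Icc 0 T) := hcV.add hl1V
    have hφint : IntegrableOn (fun s => -c * V s + l1 s * V s + l2 s) (Icc 0 T) :=
      hφ12.add hl2Icc
    have hder : ∀ x ∈ Ioo (0:ℝ) T, HasDerivWithinAt V (V' x) (Ioi x) x :=
      fun x hx => (hV x hx.1.le).mono (fun y hy => le_of_lt (lt_of_le_of_lt hx.1.le hy))
    have hmain := intervalIntegral.sub_le_integral_of_hasDeriv_right_of_le hT hVIcc hder hφint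
      (fun x hx => hineq x hx.1.le)
    rw [intervalIntegral.integral_of_le hT] at hmain
    have hsplit : ∫ s in Ioc (0:ℝ) T, (-c * V s + l1 s * V s + l2 s)
        = (∫ s in Ioc (0:ℝ) T, -c * V s) + (∫ s in Ioc (0:ℝ) T, l1 s * V s)
          + ∫ s in Ioc (0:ℝ) T, l2 s := by
      rw [integral_add (hφ12.mono_set Ioc_subset_Icc_self)
        (hl2Icc.mono_set Ioc_subset_Icc_self),
        integral_add (hcV.mono_set Ioc_subset_Icc_self) (hl1V.mono_set Ioc_subset_Icc_self)]
    have h1 : ∫ s in Ioc (0:ℝ) T, -c * V s = -c * ∫ s in Ioc (0:ℝ) T, V s :=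
      integral_const_mul _ _
    have h2 : ∫ s in Ioc (0:ℝ) T, l1 s * V s ≤ MM * L1 := by
      have s1 : ∫ s in Ioc (0:ℝ) T, l1 s * V s ≤ ∫ s in Ioc (0:ℝ) T, l1 s * MM := by
        refine setIntegral_mono_on (hl1V.mono_set Ioc_subset_Icc_self)
          ((hl1Icc.mono_set Ioc_subset_Icc_self).mul_const _) measurableSet_Ioc
          (fun s hs => ?_)
        exact mul_le_mul_of_nonneg_left (part2 s hs.1.le) (hl1nonneg s hs.1.le)
      have s2 : ∫ s in Ioc (0:ℝ) T, l1 s * MM = (∫ s in Ioc (0:ℝ) T, l1 s) * MM :=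
        integral_mul_const _ _
      have s3 : ∫ s in Ioc (0:ℝ) T, l1 s ≤ L1 := by
        refine setIntegral_mono_set hl1int ?_ (HasSubset.Subset.eventuallyLE
          (fun y hy => hy.1))
        exact ae_restrict_of_forall_mem measurableSet_Ioi (fun s hs => hl1nonneg s hs.le)
      have s4 : (∫ s in Ioc (0:ℝ) T, l1 s) * MM ≤ L1 * MM :=
        mul_le_mul_of_nonneg_right s3 hMM0
      rw [s2] at s1
      linarith [mul_comm L1 MM]
    have h3 : ∫ s in Ioc (0:ℝ) T, l2 s ≤ L2 := by
      refine setIntegral_mono_set hl2int ?_ (HasSubset.Subset.eventuallyLE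
        (fun y hy => hy.1))
      exact ae_restrict_of_forall_mem measurableSet_Ioi (fun s hs => hl2nonneg s hs.le)
    have hVT : 0 ≤ V T := hVnonneg T hT
    have hc2 : c * ∫ s in Ioc (0:ℝ) T, V s ≤ V 0 + MM * L1 + L2 := by
      rw [hsplit, h1] at hmain
      linarith
    rw [hB0def, le_div_iff₀ hc]
    linarith
  have hfi : ∀ T : ℝ, IntegrableOn V (Ioc 0 T) := by
    intro T
    have h1 : ContinuousOn V (Icc 0 (max T 0)) := hVcont.mono (fun y hy => hy.1)
    exact h1.integrableOn_Icc.mono_set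
      (fun y hy => ⟨hy.1.le, hy.2.trans (le_max_left _ _)⟩)
  refine integrableOn_Ioi_of_intervalIntegral_norm_bounded B0 0 hfi Filter.tendsto_id ?_
  filter_upwards [Filter.eventually_ge_atTop (0:ℝ)] with T hT
  rw [intervalIntegral.integral_of_le hT]
  have hcongr : ∫ s in Ioc (0:ℝ) T, ‖V s‖ = ∫ s in Ioc (0:ℝ) T, V s :=
    setIntegral_congr_fun measurableSet_Ioc
      (fun s hs => Real.norm_of_nonneg (hVnonneg s hs.1.le))
  rw [hcongr]
  exact key T hT
end

section
/- Let 𝓔, L̄ ≥ 0. Let K̃^u, K̃^v : {(x,ξ) : 0 ≤ ξ ≤ x ≤ 1} → ℝ be measurable with |K̃^u(1,ξ)| ≤ 𝓔 and |K̃^v(1,ξ)| ≤ 𝓔 for all ξ ∈ [0,1], and let L^u, L^v on the same triangle satisfy |L^u| ≤ L̄ and |L^v| ≤ L̄. For w, z ∈ L²(0,1), define v̂(x) = z(x) + ∫₀ˣ L^u(x,ξ) w(ξ) dξ + ∫₀ˣ L^v(x,ξ) z(ξ) dξ and Γ = ∫₀¹ (K̃^u(1,ξ) w(ξ) + K̃^v(1,ξ)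 v̂(ξ)) dξ. Then Γ² ≤ 2 𝓔² (2L̄² + 3L̄ + 1) (‖w‖² + ‖z‖²), where ‖·‖ denotes the L²(0,1) norm. -/
open Set MeasureTheory

noncomputable instance : IsProbabilityMeasure (volume.restrict (Ioc (0:ℝ) 1)) :=
  ⟨by rw [Measure.restrict_apply_univ]; simp [Real.volume_Ioc]⟩

lemma aux_cs {α : Type*} [MeasurableSpace α] (μ : Measure α) [IsProbabilityMeasure μ]
    (f : α → ℝ) (h1 : Integrable (fun x => |f x|) μ)
    (h2 : Integrable (fun x => f x ^ 2) μ) :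
    (∫ x, |f x| ∂μ) ^ 2 ≤ ∫ x, f x ^ 2 ∂μ := by
  set B := ∫ x, |f x| ∂μ with hB
  have h0 : 0 ≤ ∫ x, (|f x| - B) ^ 2 ∂μ := integral_nonneg fun x => sq_nonneg _
  have hfe : (fun x => (|f x| - B) ^ 2) = fun x => (f x ^ 2 - (2 * B) * |f x|) + B ^ 2 := by
    funext x; rw [← sq_abs (f x)]; ring
  have hi1 : Integrable (fun x => f x ^ 2 - (2 * B) * |f x|) μ := h2.sub (h1.const_mul _)
  rw [hfe, integral_add hi1 (integrable_const _),
    integral_sub h2 (h1.const_mul _), integral_const_mul, integral_const,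
    probReal_univ, one_smul] at h0
  nlinarith [h0]

lemma aux_inner (Lbar : ℝ) (hLbar : 0 ≤ Lbar) (L : ℝ × ℝ → ℝ) (f : ℝ → ℝ)
    (hf : Integrable f (volume.restrict (Ioc (0:ℝ) 1)))
    (hL : ∀ p, 0 ≤ p.2 ∧ p.2 ≤ p.1 ∧ p.1 ≤ 1 → |L p| ≤ Lbar)
    (x : ℝ) (hx : x ∈ Icc (0:ℝ) 1) :
    |∫ ξ in (0:ℝ)..x, L (x, ξ) * f ξ| ≤ Lbar * ∫ ξ in Ioc (0:ℝ) 1, |f ξ| := by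
  rw [intervalIntegral.integral_of_le hx.1]
  have hres : volume.restrict (Ioc (0:ℝ) x) ≤ volume.restrict (Ioc (0:ℝ) 1) :=
    Measure.restrict_mono (Ioc_subset_Ioc_right hx.2) le_rfl
  have hint : Integrable (fun ξ => Lbar * |f ξ|) (volume.restrict (Ioc (0:ℝ) 1)) :=
    hf.abs.const_mul _
  calc |∫ ξ in Ioc (0:ℝ) x, L (x, ξ) * f ξ| ≤ ∫ ξ in Ioc (0:ℝ) x, |L (x, ξ)| * |f ξ| := by
        simpa [Real.norm_eq_abs, abs_mul] using
          norm_integral_le_integral_norm (μ := volume.restrict (Ioc (0:ℝ) x))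
            (fun ξ => L (x, ξ) * f ξ)
    _ ≤ ∫ ξ in Ioc (0:ℝ) x, Lbar * |f ξ| := by
        refine integral_mono_of_nonneg
          (ae_of_all _ fun ξ => mul_nonneg (abs_nonneg _) (abs_nonneg _))
          (hint.mono_measure hres) ?_
        refine (ae_restrict_iff' measurableSet_Ioc).mpr (ae_of_all _ fun ξ hξ => ?_)
        exact mul_le_mul_of_nonneg_right (hL _ ⟨hξ.1.le, hξ.2, hx.2⟩) (abs_nonneg _)
    _ ≤ ∫ ξ in Ioc (0:ℝ) 1, Lbar * |f ξ| :=
        integral_mono_measure hres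
          (ae_of_all _ fun ξ => mul_nonneg hLbar (abs_nonneg _)) hint
    _ = Lbar * ∫ ξ in Ioc (0:ℝ) 1, |f ξ| := integral_const_mul _ _

/-- Bound on the residual boundary value `Γ` of the target system under
neural-operator-approximated kernels: if the kernel approximation errors at `x = 1`
are bounded by `𝓔` and the inverse-transformation kernels by `L̄`, then
`Γ² ≤ 2 𝓔² (2L̄² + 3L̄ + 1)(‖w‖² + ‖z‖²)`. -/
theorem stmt10 (E Lbar : ℝ) (hE : 0 ≤ E) (hLbar : 0 ≤ Lbar)
    (Ktu Ktv Lu Lv : ℝ × ℝ → ℝ)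
    (hKtu_meas : Measurable Ktu) (hKtv_meas : Measurable Ktv)
    (hLu_meas : Measurable Lu) (hLv_meas : Measurable Lv)
    (hKtu_bdd : ∀ ξ ∈ Icc (0:ℝ) 1, |Ktu (1, ξ)| ≤ E)
    (hKtv_bdd : ∀ ξ ∈ Icc (0:ℝ) 1, |Ktv (1, ξ)| ≤ E)
    (hLu_bdd : ∀ p ∈ Tri, |Lu p| ≤ Lbar) (hLv_bdd : ∀ p ∈ Tri, |Lv p| ≤ Lbar)
    (w z vhat : ℝ → ℝ)
    (hw : MemLp w 2 (volume.restrict (Ioc 0 1)))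
    (hz : MemLp z 2 (volume.restrict (Ioc 0 1)))
    (hvhat : ∀ x ∈ Icc (0:ℝ) 1,
      vhat x = z x + (∫ ξ in (0:ℝ)..x, Lu (x, ξ) * w ξ)
        + ∫ ξ in (0:ℝ)..x, Lv (x, ξ) * z ξ)
    (Γ : ℝ)
    (hΓ : Γ = ∫ ξ in (0:ℝ)..1, (Ktu (1, ξ) * w ξ + Ktv (1, ξ) * vhat ξ)) :
    Γ ^ 2 ≤ 2 * E ^ 2 * (2 * Lbar ^ 2 + 3 * Lbar + 1)
      * ((∫ x in (0:ℝ)..1, (w x) ^ 2) + ∫ x in (0:ℝ)..1, (z x) ^ 2) := by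
  set μ := volume.restrict (Ioc (0:ℝ) 1) with hμ
  have hw1 : Integrable w μ := hw.integrable one_le_two
  have hz1 : Integrable z μ := hz.integrable one_le_two
  have hw2 : Integrable (fun x => w x ^ 2) μ := hw.integrable_sq
  have hz2 : Integrable (fun x => z x ^ 2) μ := hz.integrable_sq
  set Bw := ∫ x, |w x| ∂μ with hBw
  set Bz := ∫ x, |z x| ∂μ with hBz
  have hBw0 : 0 ≤ Bw := integral_nonneg fun x => abs_nonneg _
  have hBz0 : 0 ≤ Bz := integral_nonneg fun x => abs_nonneg _
  have hCSw : Bw ^ 2 ≤ ∫ x, w x ^ 2 ∂μ := aux_cs μ w hw1.abs hw2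
  have hCSz : Bz ^ 2 ≤ ∫ x, z x ^ 2 ∂μ := aux_cs μ z hz1.abs hz2
  set c := Lbar * Bw + Lbar * Bz with hc
  set M := E * Bw + E * (Bz + c) with hM
  have hGint : Integrable (fun x => E * |w x| + E * (|z x| + c)) μ :=
    (hw1.abs.const_mul E).add
      (((hz1.abs.add (integrable_const _)).const_mul E))
  have hpt : ∀ x ∈ Ioc (0:ℝ) 1,
      |Ktu (1, x) * w x + Ktv (1, x) * vhat x|
        ≤ E * |w x| + E * (|z x| + c) := by
    intro x hx
    have hx' : x ∈ Icc (0:ℝ) 1 := ⟨hx.1.le, hx.2⟩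
    have hv : |vhat x| ≤ |z x| + c := by
      rw [hvhat x hx']
      have h1 := aux_inner Lbar hLbar Lu w hw1 hLu_bdd x hx'
      have h2 := aux_inner Lbar hLbar Lv z hz1 hLv_bdd x hx'
      calc |z x + (∫ ξ in (0:ℝ)..x, Lu (x, ξ) * w ξ) + ∫ ξ in (0:ℝ)..x, Lv (x, ξ) * z ξ|
          ≤ |z x| + |∫ ξ in (0:ℝ)..x, Lu (x, ξ) * w ξ| + |∫ ξ in (0:ℝ)..x, Lv (x, ξ) * z ξ| :=
            (abs_add_le _ _).trans (add_le_add_left (abs_add_le _ _) _)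
        _ ≤ |z x| + c := by
            rw [hc, hBw, hBz, ← add_assoc]
            exact add_le_add (add_le_add_right h1 _) h2
    calc |Ktu (1, x) * w x + Ktv (1, x) * vhat x|
        ≤ |Ktu (1, x)| * |w x| + |Ktv (1, x)| * |vhat x| := by
          rw [← abs_mul, ← abs_mul]; exact abs_add_le _ _
      _ ≤ E * |w x| + E * (|z x| + c) :=
          add_le_add
            (mul_le_mul_of_nonneg_right (hKtu_bdd x hx') (abs_nonneg _))
            (mul_le_mul (hKtv_bdd x hx') hv (abs_nonneg _) hE)
  have hΓabs : |Γ| ≤ M := by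
    rw [hΓ, intervalIntegral.integral_of_le zero_le_one]
    calc |∫ ξ in Ioc (0:ℝ) 1, (Ktu (1, ξ) * w ξ + Ktv (1, ξ) * vhat ξ)|
        ≤ ∫ ξ in Ioc (0:ℝ) 1, |Ktu (1, ξ) * w ξ + Ktv (1, ξ) * vhat ξ| := by
          simpa [Real.norm_eq_abs] using
            norm_integral_le_integral_norm (μ := μ)
              (fun ξ => Ktu (1, ξ) * w ξ + Ktv (1, ξ) * vhat ξ)
      _ ≤ ∫ x, (E * |w x| + E * (|z x| + c)) ∂μ := by
          refine integral_mono_of_nonneg (ae_of_all _ fun x => abs_nonneg _) hGint ?_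
          exact (ae_restrict_iff' measurableSet_Ioc).mpr (ae_of_all _ hpt)
      _ = M := by
          have i1 : Integrable (fun x => E * |w x|) μ := hw1.abs.const_mul E
          have i2 : Integrable (fun x => |z x| + c) μ := hz1.abs.add (integrable_const c)
          rw [hM]
          simp only [integral_add i1 (i2.const_mul E), integral_const_mul,
            integral_add hz1.abs (integrable_const c), integral_const,
            probReal_univ, one_smul, smul_eq_mul, one_mul]
          rfl
  have hM0 : 0 ≤ M := le_trans (abs_nonneg _) hΓabs
  have hΓ2 : Γ ^ 2 ≤ M ^ 2 := by
    rw [← sq_abs Γ]; exact pow_le_pow_left₀ (abs_nonneg _) hΓabs 2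
  rw [intervalIntegral.integral_of_le zero_le_one, intervalIntegral.integral_of_le zero_le_one]
  have h1 := hCSw; have h2 := hCSz
  rw [hM, hc] at hΓ2 hM0
  nlinarith [sq_nonneg (Bw - Bz), sq_nonneg (Bw + Bz), mul_nonneg hE hLbar,
    sq_nonneg E, sq_nonneg Lbar, mul_nonneg hBw0 hBz0,
    mul_nonneg (mul_nonneg hE hE) (mul_nonneg hLbar hLbar),
    mul_nonneg (mul_nonneg hE hE) hLbar,
    mul_nonneg (mul_nonneg (mul_nonneg hE hE) hLbar) (mul_nonneg hBw0 hBz0),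
    mul_nonneg (mul_nonneg (mul_nonneg hE hE) (mul_nonneg hLbar hLbar)) (mul_nonneg hBw0 hBz0),
    mul_nonneg (mul_nonneg hE hE) (mul_nonneg hBw0 hBz0)]
end
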